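/- arXiv:1909.10752 — 4 statements merged into one kernel-verified Lean document; each statement's English description precedes it below -/
import Mathlib

section
/- Let e ∈ ℝ³ be a unit vector and let A₁ and A₂ be constant real symmetric positive definite 3×3 matrices. Then A₁ and A₂ satisfy the (Cauchy) complementing condition with respect to e if and only if ⟨A₂e,e⟩⟨A₂ξ,ξ⟩ − ⟨A₂e,ξ⟩² ≠ ⟨A₁e,e⟩⟨A₁ξ,ξ⟩ − ⟨A₁e,ξ⟩² for every ξ ∈ ℝ³ with ⟨ξ,e⟩ = 0 and ξ ≠ 0. -/
open scoped Matrix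

/-- Second partial derivative `∂_k ∂_l u` of a complex-valued function on `ℝ³`. -/
noncomputable def pd2 (u : (Fin 3 → ℝ) → ℂ) (k l : Fin 3) (x : Fin 3 → ℝ) : ℂ :=
  fderiv ℝ (fun y => fderiv ℝ u y (Pi.single l 1)) x (Pi.single k 1)

/-- The (Cauchy) complementing condition of Agmon–Douglis–Nirenberg for a pair of constant
symmetric positive matrices `(A₁, A₂)` with respect to a direction `e`: for every nonzero
`ξ` orthogonal to `e`, the only bounded solution `(u₁, u₂)` on the closed half-space
`⟨x,e⟩ ≥ 0` of the form `u_j(x) = e^{i⟨x,ξ⟩} v_j(⟨x,e⟩)` (with `v_j` twice continuously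
differentiable) of the system `div(A_j ∇ u_j) = 0` in `⟨x,e⟩ > 0`, with `u₁ = u₂` and
`⟨A₁ ∇u₁, e⟩ = ⟨A₂ ∇u₂, e⟩` on `⟨x,e⟩ = 0`, is `(0, 0)`. -/
def CauchyComplementing (A₁ A₂ : Matrix (Fin 3) (Fin 3) ℝ) (e : Fin 3 → ℝ) : Prop :=
  ∀ ξ : Fin 3 → ℝ, ξ ⬝ᵥ e = 0 → ξ ≠ 0 →
    ∀ (v₁ v₂ : ℝ → ℂ) (u₁ u₂ : (Fin 3 → ℝ) → ℂ),
      ContDiff ℝ 2 v₁ → ContDiff ℝ 2 v₂ →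
      (∀ x, u₁ x = Complex.exp (Complex.I * ((x ⬝ᵥ ξ : ℝ) : ℂ)) * v₁ (x ⬝ᵥ e)) →
      (∀ x, u₂ x = Complex.exp (Complex.I * ((x ⬝ᵥ ξ : ℝ) : ℂ)) * v₂ (x ⬝ᵥ e)) →
      (∃ M : ℝ, ∀ x, 0 ≤ x ⬝ᵥ e → ‖u₁ x‖ ≤ M ∧ ‖u₂ x‖ ≤ M) →
      (∀ x, 0 < x ⬝ᵥ e → (∑ k, ∑ l, (A₁ k l : ℂ) * pd2 u₁ k l x) = 0) →
      (∀ x, 0 < x ⬝ᵥ e → (∑ k, ∑ l, (A₂ k l : ℂ) * pd2 u₂ k l x) = 0) →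
      (∀ x, x ⬝ᵥ e = 0 → u₁ x = u₂ x) →
      (∀ x, x ⬝ᵥ e = 0 →
        (∑ k, ∑ l, ((A₁ k l * e k : ℝ) : ℂ) * fderiv ℝ u₁ x (Pi.single l 1)) =
          (∑ k, ∑ l, ((A₂ k l * e k : ℝ) : ℂ) * fderiv ℝ u₂ x (Pi.single l 1))) →
      ∀ x, 0 ≤ x ⬝ᵥ e → u₁ x = 0 ∧ u₂ x = 0

/-! ### Auxiliary machinery -/

noncomputable def dotCLM (ξ : Fin 3 → ℝ) : (Fin 3 → ℝ) →L[ℝ] ℝ :=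
  ∑ i, ξ i • ContinuousLinearMap.proj i

lemma dotCLM_apply (ξ x : Fin 3 → ℝ) : dotCLM ξ x = x ⬝ᵥ ξ := by
  simp [dotCLM, dotProduct, ContinuousLinearMap.sum_apply, mul_comm]

noncomputable def Phi (ξ e : Fin 3 → ℝ) (v : ℝ → ℂ) : (Fin 3 → ℝ) → ℂ :=
  fun x => Complex.exp (Complex.I * ((x ⬝ᵥ ξ : ℝ) : ℂ)) * v (x ⬝ᵥ e)

lemma fderiv_Phi (ξ e : Fin 3 → ℝ) (v : ℝ → ℂ) (hv : Differentiable ℝ v) (x w : Fin 3 → ℝ) :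
    fderiv ℝ (Phi ξ e v) x w =
      Complex.exp (Complex.I * ((x ⬝ᵥ ξ : ℝ) : ℂ)) *
        (Complex.I * ((w ⬝ᵥ ξ : ℝ) : ℂ) * v (x ⬝ᵥ e) +
          ((w ⬝ᵥ e : ℝ) : ℂ) * deriv v (x ⬝ᵥ e)) := by
  have hφ : HasFDerivAt (fun y : Fin 3 → ℝ => ((y ⬝ᵥ ξ : ℝ) : ℂ))
      (Complex.ofRealCLM.comp (dotCLM ξ)) x := by
    have hfun : (fun y : Fin 3 → ℝ => ((y ⬝ᵥ ξ : ℝ) : ℂ)) =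
        ⇑(Complex.ofRealCLM.comp (dotCLM ξ)) := by
      funext y; simp [dotCLM_apply]
    rw [hfun]; exact (Complex.ofRealCLM.comp (dotCLM ξ)).hasFDerivAt
  have h2 := (hφ.const_mul Complex.I).cexp
  have hψ : HasFDerivAt (fun y : Fin 3 → ℝ => y ⬝ᵥ e) (dotCLM e) x := by
    have hfun : (fun y : Fin 3 → ℝ => y ⬝ᵥ e) = ⇑(dotCLM e) := by
      funext y; simp [dotCLM_apply]
    rw [hfun]; exact (dotCLM e).hasFDerivAt
  have h3 : HasFDerivAt (fun y : Fin 3 → ℝ => v (y ⬝ᵥ e))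
      (((1 : ℝ →L[ℝ] ℝ).smulRight (deriv v (x ⬝ᵥ e))).comp (dotCLM e)) x :=
    (hasDerivAt_iff_hasFDerivAt.1 (hv (x ⬝ᵥ e)).hasDerivAt).comp x hψ
  have h4 := h2.mul h3
  show (fderiv ℝ (fun y : Fin 3 → ℝ =>
    Complex.exp (Complex.I * ((y ⬝ᵥ ξ : ℝ) : ℂ)) * v (y ⬝ᵥ e)) x) w = _
  have h5 : HasFDerivAt (fun y : Fin 3 → ℝ =>
    Complex.exp (Complex.I * ((y ⬝ᵥ ξ : ℝ) : ℂ)) * v (y ⬝ᵥ e)) _ x := h4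
  rw [HasFDerivAt.fderiv h5]
  simp [dotCLM_apply, Phi]
  ring

lemma deriv2_diff (v : ℝ → ℂ) (hv : ContDiff ℝ 2 v) :
    Differentiable ℝ v ∧ Differentiable ℝ (deriv v) ∧ Continuous (deriv (deriv v)) := by
  rw [show (2 : WithTop ℕ∞) = 1 + 1 from rfl, contDiff_succ_iff_deriv] at hv
  obtain ⟨h1, -, h2⟩ := hv
  rw [contDiff_one_iff_deriv] at h2
  exact ⟨h1, h2.1, h2.2⟩

lemma pd2_Phi (ξ e : Fin 3 → ℝ) (v : ℝ → ℂ) (hv : ContDiff ℝ 2 v) (k l : Fin 3)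
    (x : Fin 3 → ℝ) :
    pd2 (Phi ξ e v) k l x =
      Complex.exp (Complex.I * ((x ⬝ᵥ ξ : ℝ) : ℂ)) *
        (Complex.I * (ξ k : ℂ) *
            (Complex.I * (ξ l : ℂ) * v (x ⬝ᵥ e) + (e l : ℂ) * deriv v (x ⬝ᵥ e)) +
          (e k : ℂ) *
            (Complex.I * (ξ l : ℂ) * deriv v (x ⬝ᵥ e) + (e l : ℂ) * deriv (deriv v) (x ⬝ᵥ e))) := by
  obtain ⟨hd1, hd2, -⟩ := deriv2_diff v hv
  set w : ℝ → ℂ := fun t => Complex.I * (ξ l : ℂ) * v t + (e l : ℂ) * deriv v t with hw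
  have hwd : Differentiable ℝ w := by
    apply Differentiable.add
    · exact hd1.const_mul _
    · exact hd2.const_mul _
  have hinner : (fun y => fderiv ℝ (Phi ξ e v) y (Pi.single l 1)) = Phi ξ e w := by
    funext y
    rw [fderiv_Phi ξ e v hd1 y (Pi.single l 1)]
    simp [Phi, hw, single_dotProduct]
  have hderivw : deriv w (x ⬝ᵥ e) =
      Complex.I * (ξ l : ℂ) * deriv v (x ⬝ᵥ e) + (e l : ℂ) * deriv (deriv v) (x ⬝ᵥ e) := by
    rw [hw]
    rw [deriv_fun_add ((hd1 _).const_mul _) ((hd2 _).const_mul _),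
      deriv_const_mul _ (hd1 _), deriv_const_mul _ (hd2 _)]
  rw [pd2, hinner, fderiv_Phi ξ e w hwd x (Pi.single k 1), hderivw]
  simp [Phi, hw, single_dotProduct]

/-! ### ODE lemmas -/

open Complex Set in
lemma hasDerivAt_cexp_mul (lam : ℂ) (t : ℝ) :
    HasDerivAt (fun s : ℝ => Complex.exp (lam * s)) (lam * Complex.exp (lam * t)) t := by
  have h1 : HasDerivAt (fun z : ℂ => Complex.exp (lam * z)) (lam * Complex.exp (lam * t)) (t : ℂ) := by
    have := ((hasDerivAt_id' (t : ℂ)).const_mul lam).cexp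
    simpa [mul_comm] using this
  simpa using h1.comp_ofReal

open Complex Set in
lemma exp_ODE (f : ℝ → ℂ) (lam : ℂ)
    (hf : ∀ t ∈ Set.Ici (0:ℝ), HasDerivAt f (lam * f t) t) :
    ∀ t ∈ Set.Ici (0:ℝ), f t = f 0 * Complex.exp (lam * t) := by
  intro T hT
  have key : ∀ t ∈ Set.Icc (0:ℝ) T, f t * Complex.exp (-lam * t) = f 0 := by
    have hcont : ContinuousOn (fun t => f t * Complex.exp (-lam * t)) (Set.Icc 0 T) := by
      intro t ht
      exact (((hf t ht.1).mul (hasDerivAt_cexp_mul (-lam) t)).continuousAt).continuousWithinAt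
    have hderiv : ∀ t ∈ Set.Ico (0:ℝ) T,
        HasDerivWithinAt (fun t => f t * Complex.exp (-lam * t)) 0 (Set.Ici t) t := by
      intro t ht
      have h := (hf t ht.1).mul (hasDerivAt_cexp_mul (-lam) t)
      have : lam * f t * Complex.exp (-lam * ↑t) + f t * (-lam * Complex.exp (-lam * ↑t)) = 0 := by
        ring
      rw [this] at h
      exact h.hasDerivWithinAt
    have := constant_of_has_deriv_right_zero hcont hderiv
    intro t ht
    simpa using this t ht
  have h0 := key T ⟨hT, le_refl T⟩
  have : f 0 * Complex.exp (lam * T) = (f T * Complex.exp (-lam * T)) * Complex.exp (lam * T) := by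
    rw [h0]
  rw [this, mul_assoc, ← Complex.exp_add]
  simp

open Complex Set in
lemma second_order_repr (v : ℝ → ℂ) (hv : Differentiable ℝ v) (hv' : Differentiable ℝ (deriv v))
    (a b c : ℂ) (ha : a ≠ 0) (lm lp : ℂ)
    (hsum : a * (lm + lp) = -(2 * Complex.I * b)) (hprod : a * (lm * lp) = -c)
    (hne : lp ≠ lm)
    (hode : ∀ t ∈ Set.Ici (0:ℝ),
      a * deriv (deriv v) t + 2 * Complex.I * b * deriv v t - c * v t = 0) :
    ∀ t ∈ Set.Ici (0:ℝ),
      v t = (v 0 - (deriv v 0 - lm * v 0) / (lp - lm)) * Complex.exp (lm * t)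
          + ((deriv v 0 - lm * v 0) / (lp - lm)) * Complex.exp (lp * t) := by
  set β := (deriv v 0 - lm * v 0) / (lp - lm) with hβ
  set g : ℝ → ℂ := fun t => deriv v t - lm * v t with hg
  have hgode : ∀ t ∈ Set.Ici (0:ℝ), HasDerivAt g (lp * g t) t := by
    intro t ht
    have h1 : HasDerivAt (deriv v) (deriv (deriv v) t) t := (hv' t).hasDerivAt
    have h2 : HasDerivAt v (deriv v t) t := (hv t).hasDerivAt
    have h3 := h1.sub (h2.const_mul lm)
    have h0 := hode t ht
    have key : a * (lp * g t) = a * (deriv (deriv v) t - lm * deriv v t) := by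
      simp only [hg]
      linear_combination (deriv v t) * hsum - (v t) * hprod - h0
    have := mul_left_cancel₀ ha key
    rw [← this] at h3
    exact h3
  have hgrep := exp_ODE g lp hgode
  intro T hT
  have key : ∀ t ∈ Set.Icc (0:ℝ) T,
      (v t - β * Complex.exp (lp * t)) * Complex.exp (-lm * t) = v 0 - β := by
    have hcont : ContinuousOn (fun t => (v t - β * Complex.exp (lp * t)) * Complex.exp (-lm * t))
        (Set.Icc 0 T) := by
      apply Continuous.continuousOn
      have hvc := hv.continuous
      fun_prop
    have hderiv : ∀ t ∈ Set.Ico (0:ℝ) T,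
        HasDerivWithinAt (fun t => (v t - β * Complex.exp (lp * t)) * Complex.exp (-lm * t))
          0 (Set.Ici t) t := by
      intro t ht
      have h2 : HasDerivAt v (deriv v t) t := (hv t).hasDerivAt
      have h : HasDerivAt (fun t => (v t - β * Complex.exp (lp * t)) * Complex.exp (-lm * t))
          ((deriv v t - β * (lp * Complex.exp (lp * ↑t))) * Complex.exp (-lm * ↑t) +
            (v t - β * Complex.exp (lp * ↑t)) * (-lm * Complex.exp (-lm * ↑t))) t :=
        ((h2.sub ((hasDerivAt_cexp_mul lp t).const_mul β)).mul
        (hasDerivAt_cexp_mul (-lm) t))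
      have hgt := hgrep t ht.1
      have hlp : lp - lm ≠ 0 := sub_ne_zero.mpr hne
      have hβeq : β * (lp - lm) = deriv v 0 - lm * v 0 := by
        rw [hβ]; exact div_mul_cancel₀ _ hlp
      have hgt' : deriv v t - lm * v t = (deriv v 0 - lm * v 0) * Complex.exp (lp * ↑t) := hgt
      have heq : (deriv v t - β * (lp * Complex.exp (lp * ↑t))) * Complex.exp (-lm * ↑t) +
          (v t - β * Complex.exp (lp * ↑t)) * (-lm * Complex.exp (-lm * ↑t)) = 0 := by
        linear_combination Complex.exp (-lm * ↑t) * hgt' -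
          Complex.exp (-lm * ↑t) * Complex.exp (lp * ↑t) * hβeq
      rw [heq] at h
      exact h.hasDerivWithinAt
    have := constant_of_has_deriv_right_zero hcont hderiv
    intro t ht
    have h0 := this t ht
    simpa using h0
  have hT' := key T ⟨hT, le_refl T⟩
  have : v T - β * Complex.exp (lp * T) = (v 0 - β) * Complex.exp (lm * T) := by
    have h1 : ((v T - β * Complex.exp (lp * T)) * Complex.exp (-lm * T)) * Complex.exp (lm * T)
        = (v 0 - β) * Complex.exp (lm * T) := by rw [hT']
    rw [mul_assoc, ← Complex.exp_add] at h1
    simpa using h1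
  linear_combination this

open Complex in
lemma beta_eq_zero (α β lm lp : ℂ) (hm : lm.re ≤ 0) (hp : 0 < lp.re) (M : ℝ)
    (hb : ∀ t : ℝ, 0 ≤ t → ‖α * Complex.exp (lm * t) + β * Complex.exp (lp * t)‖ ≤ M) :
    β = 0 := by
  by_contra hβ
  have hβ' : 0 < ‖β‖ := norm_pos_iff.2 hβ
  set C : ℝ := (M + ‖α‖ + 1) / ‖β‖ with hC
  have hM : 0 ≤ M := le_trans
    (norm_nonneg (α * Complex.exp (lm * (0:ℝ)) + β * Complex.exp (lp * (0:ℝ)))) (hb 0 le_rfl)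
  have hCpos : 0 < C := div_pos (by linarith [norm_nonneg α]) hβ'
  set t : ℝ := max 0 ((Real.log C + 1) / lp.re) with ht
  have ht0 : 0 ≤ t := le_max_left _ _
  have hkey : ‖β‖ * Real.exp (lp.re * t) ≤ M + ‖α‖ := by
    have h1 := hb t ht0
    have h2 : ‖β * Complex.exp (lp * t)‖ - ‖α * Complex.exp (lm * t)‖ ≤
        ‖α * Complex.exp (lm * t) + β * Complex.exp (lp * t)‖ := by
      have h2' := norm_sub_norm_le (β * Complex.exp (lp * (t:ℝ))) (-(α * Complex.exp (lm * (t:ℝ))))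
      simp only [norm_neg, sub_neg_eq_add] at h2'
      calc ‖β * Complex.exp (lp * (t:ℝ))‖ - ‖α * Complex.exp (lm * (t:ℝ))‖
          ≤ ‖β * Complex.exp (lp * (t:ℝ)) + α * Complex.exp (lm * (t:ℝ))‖ := h2'
        _ = ‖α * Complex.exp (lm * (t:ℝ)) + β * Complex.exp (lp * (t:ℝ))‖ := by rw [add_comm]
    have h3 : ‖β * Complex.exp (lp * t)‖ = ‖β‖ * Real.exp (lp.re * t) := by
      rw [norm_mul, Complex.norm_exp]
      congr 2
      simp [Complex.mul_re]
    have h4 : ‖α * Complex.exp (lm * t)‖ ≤ ‖α‖ := by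
      rw [norm_mul, Complex.norm_exp]
      have : (lm * t).re ≤ 0 := by
        simp only [Complex.mul_re, Complex.ofReal_re, Complex.ofReal_im, mul_zero, sub_zero]
        exact mul_nonpos_of_nonpos_of_nonneg hm ht0
      nlinarith [Real.exp_le_one_iff.2 this, norm_nonneg α, Real.exp_pos (lm * ↑t).re]
    nlinarith [h2, h1]
  have hexp : C < Real.exp (lp.re * t) := by
    have h5 : Real.log C + 1 ≤ lp.re * t := by
      have : (Real.log C + 1) / lp.re ≤ t := le_max_right _ _
      calc Real.log C + 1 = lp.re * ((Real.log C + 1) / lp.re) := by field_simp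
        _ ≤ lp.re * t := by exact mul_le_mul_of_nonneg_left this hp.le
    calc C = Real.exp (Real.log C) := (Real.exp_log hCpos).symm
      _ < Real.exp (lp.re * t) := Real.exp_lt_exp.2 (by linarith)
  have : ‖β‖ * C < ‖β‖ * Real.exp (lp.re * t) := mul_lt_mul_of_pos_left hexp hβ'
  rw [hC] at this
  rw [mul_div_cancel₀ _ (ne_of_gt hβ')] at this
  linarith

/-! ### Algebraic lemmas -/

open Complex in
lemma isSymm_apply' (A : Matrix (Fin 3) (Fin 3) ℝ) (hA : A.IsSymm) (i j : Fin 3) :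
    A i j = A j i := by
  conv_lhs => rw [← hA]
  rfl

open Complex in
lemma sum_A_mul2 (A : Matrix (Fin 3) (Fin 3) ℝ) (hA : A.IsSymm) (ξ e : Fin 3 → ℝ)
    (E V V' V'' : ℂ) :
    (∑ k, ∑ l, (A k l : ℂ) *
        (E * (Complex.I * (ξ k : ℂ) * (Complex.I * (ξ l : ℂ) * V + (e l : ℂ) * V') +
          (e k : ℂ) * (Complex.I * (ξ l : ℂ) * V' + (e l : ℂ) * V'')))) =
      E * (((A.mulVec e ⬝ᵥ e : ℝ) : ℂ) * V''
        + Complex.I * (2 * ((A.mulVec e ⬝ᵥ ξ : ℝ) : ℂ)) * V'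
        - ((A.mulVec ξ ⬝ᵥ ξ : ℝ) : ℂ) * V) := by
  have h10 := isSymm_apply' A hA 1 0
  have h20 := isSymm_apply' A hA 2 0
  have h21 := isSymm_apply' A hA 2 1
  simp only [Fin.sum_univ_three, Matrix.mulVec, dotProduct, Fin.isValue]
  push_cast
  rw [h10, h20, h21]
  linear_combination (E * V * (((A 0 0 : ℝ) : ℂ) * ((ξ 0 : ℝ) : ℂ) ^ 2 +
    2 * ((A 0 1 : ℝ) : ℂ) * ((ξ 0 : ℝ) : ℂ) * ((ξ 1 : ℝ) : ℂ) +
    2 * ((A 0 2 : ℝ) : ℂ) * ((ξ 0 : ℝ) : ℂ) * ((ξ 2 : ℝ) : ℂ) +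
    ((A 1 1 : ℝ) : ℂ) * ((ξ 1 : ℝ) : ℂ) ^ 2 +
    2 * ((A 1 2 : ℝ) : ℂ) * ((ξ 1 : ℝ) : ℂ) * ((ξ 2 : ℝ) : ℂ) +
    ((A 2 2 : ℝ) : ℂ) * ((ξ 2 : ℝ) : ℂ) ^ 2)) * Complex.I_sq

open Complex in
lemma sum_A_mul1 (A : Matrix (Fin 3) (Fin 3) ℝ) (hA : A.IsSymm) (ξ e : Fin 3 → ℝ)
    (E V V' : ℂ) :
    (∑ k, ∑ l, ((A k l * e k : ℝ) : ℂ) *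
        (E * (Complex.I * (ξ l : ℂ) * V + (e l : ℂ) * V'))) =
      E * (Complex.I * ((A.mulVec e ⬝ᵥ ξ : ℝ) : ℂ) * V + ((A.mulVec e ⬝ᵥ e : ℝ) : ℂ) * V') := by
  have h10 := isSymm_apply' A hA 1 0
  have h20 := isSymm_apply' A hA 2 0
  have h21 := isSymm_apply' A hA 2 1
  simp only [Fin.sum_univ_three, Matrix.mulVec, dotProduct, Fin.isValue]
  push_cast
  rw [h10, h20, h21]
  ring

lemma mulVec_dot_symm (A : Matrix (Fin 3) (Fin 3) ℝ) (hA : A.IsSymm) (x y : Fin 3 → ℝ) :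
    A.mulVec x ⬝ᵥ y = A.mulVec y ⬝ᵥ x := by
  have h10 := isSymm_apply' A hA 1 0
  have h20 := isSymm_apply' A hA 2 0
  have h21 := isSymm_apply' A hA 2 1
  simp only [Fin.sum_univ_three, Matrix.mulVec, dotProduct, Fin.isValue]
  rw [h10, h20, h21]
  ring

lemma gram_pos (A : Matrix (Fin 3) (Fin 3) ℝ) (hA : A.IsSymm)
    (hpos : ∀ x : Fin 3 → ℝ, x ≠ 0 → 0 < A.mulVec x ⬝ᵥ x)
    (e ξ : Fin 3 → ℝ) (he : e ⬝ᵥ e = 1) (hξ : ξ ≠ 0) (horth : ξ ⬝ᵥ e = 0) :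
    0 < (A.mulVec e ⬝ᵥ e) * (A.mulVec ξ ⬝ᵥ ξ) - (A.mulVec e ⬝ᵥ ξ) ^ 2 := by
  set a := A.mulVec e ⬝ᵥ e with hadef
  set b := A.mulVec e ⬝ᵥ ξ with hbdef
  set c := A.mulVec ξ ⬝ᵥ ξ with hcdef
  have he0 : e ≠ 0 := by
    intro h; rw [h] at he; simp at he
  have ha : 0 < a := hpos e he0
  have hc : 0 < c := hpos ξ hξ
  have hy : a • ξ - b • e ≠ 0 := by
    intro h
    have h' : a • ξ = b • e := by rwa [sub_eq_zero] at h
    have : (a • ξ) ⬝ᵥ ξ = (b • e) ⬝ᵥ ξ := by rw [h']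
    rw [smul_dotProduct, smul_dotProduct] at this
    rw [dotProduct_comm e ξ, horth] at this
    have hξξ : 0 < ξ ⬝ᵥ ξ := by
      have h0 : 0 ≤ ξ ⬝ᵥ ξ := Finset.sum_nonneg fun i _ => mul_self_nonneg _
      rcases h0.lt_or_eq with h1 | h1
      · exact h1
      · exact absurd ((dotProduct_self_eq_zero (v := ξ)).1 h1.symm) hξ
    simp only [smul_eq_mul, mul_zero] at this
    nlinarith
  have hAy := hpos _ hy
  have hexp : A.mulVec (a • ξ - b • e) ⬝ᵥ (a • ξ - b • e) = a * (a * c - b ^ 2) := by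
    rw [Matrix.mulVec_sub, Matrix.mulVec_smul, Matrix.mulVec_smul]
    rw [sub_dotProduct, smul_dotProduct, smul_dotProduct,
      dotProduct_sub, dotProduct_sub, dotProduct_smul,
      dotProduct_smul, dotProduct_smul, dotProduct_smul]
    have hsym : A.mulVec ξ ⬝ᵥ e = b := by rw [mulVec_dot_symm A hA ξ e]
    rw [hsym]
    simp only [smul_eq_mul, ← hadef, ← hbdef, ← hcdef]
    ring
  rw [hexp] at hAy
  nlinarith

/-! ### The characteristic roots -/

noncomputable def lamM (a b c : ℝ) : ℂ :=
  (↑(-(Real.sqrt (a * c - b ^ 2) / a)) : ℂ) + (↑(-(b / a)) : ℂ) * Complex.I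

noncomputable def lamP (a b c : ℝ) : ℂ :=
  (↑(Real.sqrt (a * c - b ^ 2) / a) : ℂ) + (↑(-(b / a)) : ℂ) * Complex.I

open Complex in
lemma root_facts (a b c : ℝ) (ha : 0 < a) (hd : 0 < a * c - b ^ 2) :
    (lamM a b c).re < 0 ∧ 0 < (lamP a b c).re ∧
    (a : ℂ) * (lamM a b c + lamP a b c) = -(2 * Complex.I * (b : ℂ)) ∧
    (a : ℂ) * (lamM a b c * lamP a b c) = -(c : ℂ) ∧
    lamP a b c ≠ lamM a b c ∧
    (a : ℂ) * lamM a b c = -((Real.sqrt (a * c - b ^ 2) : ℝ) : ℂ) - (b : ℂ) * Complex.I := by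
  set D := Real.sqrt (a * c - b ^ 2) with hD
  have hDpos : 0 < D := Real.sqrt_pos.2 hd
  have hD2 : D ^ 2 = a * c - b ^ 2 := Real.sq_sqrt hd.le
  have ha0 : (a : ℝ) ≠ 0 := ne_of_gt ha
  have ha0' : (a : ℂ) ≠ 0 := by exact_mod_cast ha0
  refine ⟨?_, ?_, ?_, ?_, ?_, ?_⟩
  · simp [lamM, ← hD]
    positivity
  · simp [lamP, ← hD]
    positivity
  · simp only [lamM, lamP, ← hD]
    push_cast
    field_simp
    ring
  · simp only [lamM, lamP, ← hD]
    have hD2' : ((D : ℝ) : ℂ) ^ 2 = (a : ℂ) * c - (b : ℂ) ^ 2 := by exact_mod_cast hD2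
    push_cast
    field_simp
    linear_combination (-1:ℂ) * hD2' + (b:ℂ)^2 * Complex.I_sq
  · intro h
    have : (lamP a b c).re = (lamM a b c).re := by rw [h]
    simp only [lamM, lamP, ← hD] at this
    simp at this
    have hda : 0 < D / a := div_pos hDpos ha
    linarith
  · simp only [lamM, ← hD]
    push_cast
    field_simp
    ring

/-! ### Solving one half-space problem -/

open Complex Set in
lemma solve_one (A : Matrix (Fin 3) (Fin 3) ℝ) (hA : A.IsSymm)
    (hpos : ∀ x : Fin 3 → ℝ, x ≠ 0 → 0 < A.mulVec x ⬝ᵥ x)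
    (e ξ : Fin 3 → ℝ) (he : e ⬝ᵥ e = 1) (horth : ξ ⬝ᵥ e = 0) (hξ : ξ ≠ 0)
    (v : ℝ → ℂ) (hv : ContDiff ℝ 2 v)
    (hPDE : ∀ x, 0 < x ⬝ᵥ e → (∑ k, ∑ l, (A k l : ℂ) * pd2 (Phi ξ e v) k l x) = 0)
    (M : ℝ) (hbound : ∀ t : ℝ, 0 ≤ t → ‖v t‖ ≤ M) :
    deriv v 0 = lamM (A.mulVec e ⬝ᵥ e) (A.mulVec e ⬝ᵥ ξ) (A.mulVec ξ ⬝ᵥ ξ) * v 0 ∧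
    ∀ t ∈ Set.Ici (0:ℝ), v t = v 0 *
      Complex.exp (lamM (A.mulVec e ⬝ᵥ e) (A.mulVec e ⬝ᵥ ξ) (A.mulVec ξ ⬝ᵥ ξ) * t) := by
  obtain ⟨hd1, hd2, hd3⟩ := deriv2_diff v hv
  set a := A.mulVec e ⬝ᵥ e with hadef
  set b := A.mulVec e ⬝ᵥ ξ with hbdef
  set c := A.mulVec ξ ⬝ᵥ ξ with hcdef
  have he0 : e ≠ 0 := by intro h; rw [h] at he; simp at he
  have ha : 0 < a := hpos e he0
  have hdet : 0 < a * c - b ^ 2 := gram_pos A hA hpos e ξ he hξ horth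
  obtain ⟨hmre, hpre, hsum, hprod, hne, hlm⟩ := root_facts a b c ha hdet
  set lm := lamM a b c
  set lp := lamP a b c
  have ha0' : (a : ℂ) ≠ 0 := by
    exact_mod_cast ne_of_gt ha
  -- dot product computations for x = t • e
  have hte : ∀ t : ℝ, (t • e) ⬝ᵥ e = t := by
    intro t; rw [smul_dotProduct, he]; simp
  have htξ : ∀ t : ℝ, (t • e) ⬝ᵥ ξ = 0 := by
    intro t; rw [smul_dotProduct, dotProduct_comm e ξ, horth]; simp
  -- the ODE on (0, ∞)
  have hodeIoi : ∀ t : ℝ, 0 < t →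
      (a : ℂ) * deriv (deriv v) t + 2 * Complex.I * (b : ℂ) * deriv v t - (c : ℂ) * v t = 0 := by
    intro t ht
    have hx := hPDE (t • e) (by rw [hte]; exact ht)
    simp only [pd2_Phi ξ e v hv] at hx
    rw [sum_A_mul2 A hA ξ e] at hx
    rw [hte, htξ] at hx
    have hE : Complex.exp (Complex.I * ((0 : ℝ) : ℂ)) ≠ 0 := Complex.exp_ne_zero _
    have hbr := (mul_eq_zero.1 hx).resolve_left hE
    rw [← hadef, ← hbdef, ← hcdef] at hbr
    linear_combination hbr
  -- extend to t = 0 by continuity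
  have hode : ∀ t ∈ Set.Ici (0:ℝ),
      (a : ℂ) * deriv (deriv v) t + 2 * Complex.I * (b : ℂ) * deriv v t - (c : ℂ) * v t = 0 := by
    intro t ht
    rcases eq_or_lt_of_le (Set.mem_Ici.mp ht) with h | h
    · subst h
      set F : ℝ → ℂ := fun s =>
        (a : ℂ) * deriv (deriv v) s + 2 * Complex.I * (b : ℂ) * deriv v s - (c : ℂ) * v s with hF
      have hFc : Continuous F := by
        apply Continuous.sub
        apply Continuous.add
        · exact continuous_const.mul hd3
        · exact continuous_const.mul hd2.continuous
        · exact continuous_const.mul hd1.continuous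
      have h1 : Filter.Tendsto F (nhdsWithin 0 (Set.Ioi 0)) (nhds (F 0)) :=
        (hFc.continuousAt).continuousWithinAt
      have h2 : Filter.Tendsto F (nhdsWithin 0 (Set.Ioi 0)) (nhds 0) := by
        apply Filter.Tendsto.congr' _ tendsto_const_nhds
        filter_upwards [self_mem_nhdsWithin] with s hs
        exact (hodeIoi s hs).symm
      exact tendsto_nhds_unique h1 h2
    · exact hodeIoi t h
  have hrepr := second_order_repr v hd1 hd2 (a:ℂ) (b:ℂ) (c:ℂ) ha0' lm lp hsum hprod hne hode
  set β := (deriv v 0 - lm * v 0) / (lp - lm) with hβ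
  have hβ0 : β = 0 := by
    apply beta_eq_zero (v 0 - β) β lm lp (le_of_lt hmre) hpre M
    intro t ht
    rw [← hrepr t ht]
    exact hbound t ht
  have hderiv0 : deriv v 0 = lm * v 0 := by
    rw [hβ] at hβ0
    rcases div_eq_zero_iff.1 hβ0 with h | h
    · linear_combination h
    · exact absurd (sub_eq_zero.1 h) hne
  refine ⟨hderiv0, ?_⟩
  intro t ht
  have := hrepr t ht
  rw [hβ0] at this
  simpa using this

open Complex Set in
lemma contDiff_cexp_mul (lm : ℂ) : ContDiff ℝ 2 (fun t : ℝ => Complex.exp (lm * t)) := by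
  have h1 : ContDiff ℝ 2 (fun t : ℝ => lm * (t : ℂ)) :=
    contDiff_const.mul (Complex.ofRealCLM.contDiff.of_le le_top)
  exact Complex.contDiff_exp.comp h1

open Complex in
lemma norm_Phi_le_one (ξ e : Fin 3 → ℝ) (lm : ℂ) (hm : lm.re ≤ 0) (x : Fin 3 → ℝ)
    (hx : 0 ≤ x ⬝ᵥ e) : ‖Phi ξ e (fun t => Complex.exp (lm * t)) x‖ ≤ 1 := by
  have h1 : ‖Phi ξ e (fun t => Complex.exp (lm * t)) x‖ =
      Real.exp ((Complex.I * ((x ⬝ᵥ ξ : ℝ) : ℂ)).re) * Real.exp ((lm * ((x ⬝ᵥ e : ℝ) : ℂ)).re) := by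
    rw [Phi, norm_mul, Complex.norm_exp,
      Complex.norm_exp]
  rw [h1]
  have h2 : (Complex.I * ((x ⬝ᵥ ξ : ℝ) : ℂ)).re = 0 := by
    simp [Complex.mul_re]
  have h3 : (lm * ((x ⬝ᵥ e : ℝ) : ℂ)).re = lm.re * (x ⬝ᵥ e) := by
    simp [Complex.mul_re]
  rw [h2, h3, Real.exp_zero, one_mul]
  exact Real.exp_le_one_iff.2 (mul_nonpos_of_nonpos_of_nonneg hm hx)

open Complex in
lemma single_dot_cast (ξ : Fin 3 → ℝ) (l : Fin 3) :
    ((Pi.single l (1:ℝ) ⬝ᵥ ξ : ℝ) : ℂ) = ((ξ l : ℝ) : ℂ) := by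
  rw [single_dotProduct, one_mul]

/-- Algebraic characterization of the (Cauchy) complementing condition: two constant real
symmetric positive definite matrices `A₁, A₂` satisfy the complementing condition with respect
to a unit vector `e` if and only if
`⟨A₂e,e⟩⟨A₂ξ,ξ⟩ − ⟨A₂e,ξ⟩² ≠ ⟨A₁e,e⟩⟨A₁ξ,ξ⟩ − ⟨A₁e,ξ⟩²` for all nonzero `ξ ⊥ e`. -/
theorem cauchyComplementing_iff_gram_det_ne
    (e : Fin 3 → ℝ) (he : e ⬝ᵥ e = 1)
    (A₁ A₂ : Matrix (Fin 3) (Fin 3) ℝ)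
    (h₁symm : A₁.IsSymm) (h₂symm : A₂.IsSymm)
    (h₁pos : ∀ x : Fin 3 → ℝ, x ≠ 0 → 0 < A₁.mulVec x ⬝ᵥ x)
    (h₂pos : ∀ x : Fin 3 → ℝ, x ≠ 0 → 0 < A₂.mulVec x ⬝ᵥ x) :
    CauchyComplementing A₁ A₂ e ↔
      ∀ ξ : Fin 3 → ℝ, ξ ⬝ᵥ e = 0 → ξ ≠ 0 →
        (A₂.mulVec e ⬝ᵥ e) * (A₂.mulVec ξ ⬝ᵥ ξ) - (A₂.mulVec e ⬝ᵥ ξ) ^ 2 ≠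
          (A₁.mulVec e ⬝ᵥ e) * (A₁.mulVec ξ ⬝ᵥ ξ) - (A₁.mulVec e ⬝ᵥ ξ) ^ 2 := by
  have he0 : e ≠ 0 := by intro h; rw [h] at he; simp at he
  constructor
  · -- complementing → determinant condition
    intro hCC ξ horth hξ
    by_contra hdetne
    set a₁ := A₁.mulVec e ⬝ᵥ e with ha₁def
    set b₁ := A₁.mulVec e ⬝ᵥ ξ with hb₁def
    set c₁ := A₁.mulVec ξ ⬝ᵥ ξ with hc₁def
    set a₂ := A₂.mulVec e ⬝ᵥ e with ha₂def
    set b₂ := A₂.mulVec e ⬝ᵥ ξ with hb₂def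
    set c₂ := A₂.mulVec ξ ⬝ᵥ ξ with hc₂def
    have hdet₁ : 0 < a₁ * c₁ - b₁ ^ 2 := gram_pos A₁ h₁symm h₁pos e ξ he hξ horth
    have hdet₂ : 0 < a₂ * c₂ - b₂ ^ 2 := gram_pos A₂ h₂symm h₂pos e ξ he hξ horth
    obtain ⟨hm₁, hp₁, hsum₁, hprod₁, hne₁, hlm₁⟩ := root_facts a₁ b₁ c₁ (h₁pos e he0) hdet₁
    obtain ⟨hm₂, hp₂, hsum₂, hprod₂, hne₂, hlm₂⟩ := root_facts a₂ b₂ c₂ (h₂pos e he0) hdet₂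
    set lm₁ := lamM a₁ b₁ c₁ with hlm₁def
    set lm₂ := lamM a₂ b₂ c₂ with hlm₂def
    set v₁ : ℝ → ℂ := fun t => Complex.exp (lm₁ * t) with hv₁def
    set v₂ : ℝ → ℂ := fun t => Complex.exp (lm₂ * t) with hv₂def
    have hcd₁ : ContDiff ℝ 2 v₁ := contDiff_cexp_mul lm₁
    have hcd₂ : ContDiff ℝ 2 v₂ := contDiff_cexp_mul lm₂
    have hdv₁ : deriv v₁ = fun t => lm₁ * v₁ t :=
      funext fun t => (hasDerivAt_cexp_mul lm₁ t).deriv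
    have hdv₂ : deriv v₂ = fun t => lm₂ * v₂ t :=
      funext fun t => (hasDerivAt_cexp_mul lm₂ t).deriv
    have hddv₁ : ∀ t, deriv (deriv v₁) t = lm₁ * (lm₁ * v₁ t) := by
      intro t; rw [hdv₁]
      exact ((hasDerivAt_cexp_mul lm₁ t).const_mul lm₁).deriv
    have hddv₂ : ∀ t, deriv (deriv v₂) t = lm₂ * (lm₂ * v₂ t) := by
      intro t; rw [hdv₂]
      exact ((hasDerivAt_cexp_mul lm₂ t).const_mul lm₂).deriv
    have hroot₁ : (a₁:ℂ) * lm₁ ^ 2 + 2 * Complex.I * (b₁:ℂ) * lm₁ - (c₁:ℂ) = 0 := by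
      linear_combination lm₁ * hsum₁ - hprod₁
    have hroot₂ : (a₂:ℂ) * lm₂ ^ 2 + 2 * Complex.I * (b₂:ℂ) * lm₂ - (c₂:ℂ) = 0 := by
      linear_combination lm₂ * hsum₂ - hprod₂
    have hPDE₁ : ∀ x, 0 < x ⬝ᵥ e →
        (∑ k, ∑ l, (A₁ k l : ℂ) * pd2 (Phi ξ e v₁) k l x) = 0 := by
      intro x hx
      simp only [pd2_Phi ξ e v₁ hcd₁]
      rw [sum_A_mul2 A₁ h₁symm ξ e]
      have h1 : deriv v₁ (x ⬝ᵥ e) = lm₁ * v₁ (x ⬝ᵥ e) := by rw [hdv₁]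
      have h2 : deriv (deriv v₁) (x ⬝ᵥ e) = lm₁ * (lm₁ * v₁ (x ⬝ᵥ e)) := hddv₁ _
      rw [h2, h1, ← ha₁def, ← hb₁def, ← hc₁def]
      linear_combination (Complex.exp (Complex.I * ((x ⬝ᵥ ξ : ℝ) : ℂ)) * v₁ (x ⬝ᵥ e)) * hroot₁
    have hPDE₂ : ∀ x, 0 < x ⬝ᵥ e →
        (∑ k, ∑ l, (A₂ k l : ℂ) * pd2 (Phi ξ e v₂) k l x) = 0 := by
      intro x hx
      simp only [pd2_Phi ξ e v₂ hcd₂]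
      rw [sum_A_mul2 A₂ h₂symm ξ e]
      have h1 : deriv v₂ (x ⬝ᵥ e) = lm₂ * v₂ (x ⬝ᵥ e) := by rw [hdv₂]
      have h2 : deriv (deriv v₂) (x ⬝ᵥ e) = lm₂ * (lm₂ * v₂ (x ⬝ᵥ e)) := hddv₂ _
      rw [h2, h1, ← ha₂def, ← hb₂def, ← hc₂def]
      linear_combination (Complex.exp (Complex.I * ((x ⬝ᵥ ξ : ℝ) : ℂ)) * v₂ (x ⬝ᵥ e)) * hroot₂
    have hbdry : ∀ x, x ⬝ᵥ e = 0 → Phi ξ e v₁ x = Phi ξ e v₂ x := by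
      intro x hx
      rw [Phi, Phi, hx]
      simp [hv₁def, hv₂def]
    have hDc : ((Real.sqrt (a₁ * c₁ - b₁ ^ 2) : ℝ) : ℂ) =
        ((Real.sqrt (a₂ * c₂ - b₂ ^ 2) : ℝ) : ℂ) := by
      rw [hdetne]
    have hconorm : ∀ x, x ⬝ᵥ e = 0 →
        (∑ k, ∑ l, ((A₁ k l * e k : ℝ) : ℂ) * fderiv ℝ (Phi ξ e v₁) x (Pi.single l 1)) =
          (∑ k, ∑ l, ((A₂ k l * e k : ℝ) : ℂ) * fderiv ℝ (Phi ξ e v₂) x (Pi.single l 1)) := by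
      intro x hx
      have hd1 : Differentiable ℝ v₁ := (deriv2_diff v₁ hcd₁).1
      have hd2 : Differentiable ℝ v₂ := (deriv2_diff v₂ hcd₂).1
      simp only [fderiv_Phi ξ e v₁ hd1, fderiv_Phi ξ e v₂ hd2, single_dot_cast]
      rw [sum_A_mul1 A₁ h₁symm ξ e, sum_A_mul1 A₂ h₂symm ξ e, hx,
        ← ha₁def, ← hb₁def, ← ha₂def, ← hb₂def]
      have hv₁0 : v₁ 0 = 1 := by rw [hv₁def]; simp
      have hv₂0 : v₂ 0 = 1 := by rw [hv₂def]; simp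
      have hdv₁0 : deriv v₁ 0 = lm₁ := by rw [hdv₁]; simp [hv₁0]
      have hdv₂0 : deriv v₂ 0 = lm₂ := by rw [hdv₂]; simp [hv₂0]
      rw [hv₁0, hv₂0, hdv₁0, hdv₂0]
      set E := Complex.exp (Complex.I * ((x ⬝ᵥ ξ : ℝ) : ℂ)) with hE
      linear_combination E * hlm₁ - E * hlm₂ - E * hDc
    have happ := hCC ξ horth hξ v₁ v₂ (Phi ξ e v₁) (Phi ξ e v₂) hcd₁ hcd₂
      (fun x => rfl) (fun x => rfl)
      ⟨1, fun x hx => ⟨by rw [hv₁def]; exact norm_Phi_le_one ξ e lm₁ hm₁.le x hx,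
        by rw [hv₂def]; exact norm_Phi_le_one ξ e lm₂ hm₂.le x hx⟩⟩
      hPDE₁ hPDE₂ hbdry hconorm 0 (by rw [zero_dotProduct])
    have h1 := happ.1
    rw [Phi] at h1
    rw [zero_dotProduct, zero_dotProduct] at h1
    rw [hv₁def] at h1
    simp at h1
  · -- determinant condition → complementing
    intro hdet ξ horth hξ v₁ v₂ u₁ u₂ hv₁ hv₂ hu₁ hu₂ hbound hP1 hP2 hbd hcn
    have hu₁' : u₁ = Phi ξ e v₁ := funext hu₁
    have hu₂' : u₂ = Phi ξ e v₂ := funext hu₂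
    obtain ⟨M, hM⟩ := hbound
    set a₁ := A₁.mulVec e ⬝ᵥ e with ha₁def
    set b₁ := A₁.mulVec e ⬝ᵥ ξ with hb₁def
    set c₁ := A₁.mulVec ξ ⬝ᵥ ξ with hc₁def
    set a₂ := A₂.mulVec e ⬝ᵥ e with ha₂def
    set b₂ := A₂.mulVec e ⬝ᵥ ξ with hb₂def
    set c₂ := A₂.mulVec ξ ⬝ᵥ ξ with hc₂def
    have hdet₁ : 0 < a₁ * c₁ - b₁ ^ 2 := gram_pos A₁ h₁symm h₁pos e ξ he hξ horth
    have hdet₂ : 0 < a₂ * c₂ - b₂ ^ 2 := gram_pos A₂ h₂symm h₂pos e ξ he hξ horth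
    obtain ⟨hm₁, hp₁, hsum₁, hprod₁, hne₁, hlm₁⟩ := root_facts a₁ b₁ c₁ (h₁pos e he0) hdet₁
    obtain ⟨hm₂, hp₂, hsum₂, hprod₂, hne₂, hlm₂⟩ := root_facts a₂ b₂ c₂ (h₂pos e he0) hdet₂
    set lm₁ := lamM a₁ b₁ c₁ with hlm₁def
    set lm₂ := lamM a₂ b₂ c₂ with hlm₂def
    have hte : ∀ t : ℝ, (t • e) ⬝ᵥ e = t := by
      intro t; rw [smul_dotProduct, he]; simp
    have htξ : ∀ t : ℝ, (t • e) ⬝ᵥ ξ = 0 := by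
      intro t; rw [smul_dotProduct, dotProduct_comm e ξ, horth]; simp
    have hvb₁ : ∀ t : ℝ, 0 ≤ t → ‖v₁ t‖ ≤ M := by
      intro t ht
      have h := (hM (t • e) (by rw [hte]; exact ht)).1
      rw [hu₁ (t • e), hte, htξ] at h
      simpa using h
    have hvb₂ : ∀ t : ℝ, 0 ≤ t → ‖v₂ t‖ ≤ M := by
      intro t ht
      have h := (hM (t • e) (by rw [hte]; exact ht)).2
      rw [hu₂ (t • e), hte, htξ] at h
      simpa using h
    obtain ⟨hd₁0, hrep₁⟩ := solve_one A₁ h₁symm h₁pos e ξ he horth hξ v₁ hv₁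
      (by intro x hx; have h := hP1 x hx; rwa [hu₁'] at h) M hvb₁
    obtain ⟨hd₂0, hrep₂⟩ := solve_one A₂ h₂symm h₂pos e ξ he horth hξ v₂ hv₂
      (by intro x hx; have h := hP2 x hx; rwa [hu₂'] at h) M hvb₂
    rw [← ha₁def, ← hb₁def, ← hc₁def, ← hlm₁def] at hd₁0 hrep₁
    rw [← ha₂def, ← hb₂def, ← hc₂def, ← hlm₂def] at hd₂0 hrep₂
    have hγeq : v₁ 0 = v₂ 0 := by
      have h := hbd 0 (by rw [zero_dotProduct])
      rw [hu₁ 0, hu₂ 0, zero_dotProduct, zero_dotProduct] at h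
      simpa using h
    have hd1 : Differentiable ℝ v₁ := (deriv2_diff v₁ hv₁).1
    have hd2 : Differentiable ℝ v₂ := (deriv2_diff v₂ hv₂).1
    have hceq := hcn 0 (by rw [zero_dotProduct])
    rw [hu₁', hu₂'] at hceq
    simp only [fderiv_Phi ξ e v₁ hd1, fderiv_Phi ξ e v₂ hd2, single_dot_cast] at hceq
    rw [sum_A_mul1 A₁ h₁symm ξ e, sum_A_mul1 A₂ h₂symm ξ e] at hceq
    rw [zero_dotProduct, zero_dotProduct] at hceq
    rw [← ha₁def, ← hb₁def, ← ha₂def, ← hb₂def] at hceq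
    rw [hd₁0, hd₂0, hγeq] at hceq
    have hEne : Complex.exp (Complex.I * (((0:ℝ)) : ℂ)) ≠ 0 := Complex.exp_ne_zero _
    have hγ0 : v₂ 0 = 0 := by
      have hDne : Real.sqrt (a₁ * c₁ - b₁ ^ 2) ≠ Real.sqrt (a₂ * c₂ - b₂ ^ 2) := by
        intro h
        apply hdet ξ horth hξ
        rw [← Real.sq_sqrt hdet₂.le, ← h, Real.sq_sqrt hdet₁.le]
      have hDcne : ((Real.sqrt (a₁ * c₁ - b₁ ^ 2) : ℝ) : ℂ) -
          ((Real.sqrt (a₂ * c₂ - b₂ ^ 2) : ℝ) : ℂ) ≠ 0 := by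
        rw [sub_ne_zero]
        exact_mod_cast hDne
      have hkey : (((Real.sqrt (a₁ * c₁ - b₁ ^ 2) : ℝ) : ℂ) -
          ((Real.sqrt (a₂ * c₂ - b₂ ^ 2) : ℝ) : ℂ)) * v₂ 0 = 0 := by
        have hE1 : Complex.exp (Complex.I * (((0:ℝ)) : ℂ)) = 1 := by simp
        rw [hE1] at hceq
        linear_combination (v₂ 0) * hlm₁ - (v₂ 0) * hlm₂ - hceq
      exact (mul_eq_zero.1 hkey).resolve_left hDcne
    have hγ0' : v₁ 0 = 0 := by rw [hγeq, hγ0]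
    intro x hx
    constructor
    · rw [hu₁ x]
      have h := hrep₁ (x ⬝ᵥ e) hx
      rw [hγ0'] at h
      rw [h]
      simp
    · rw [hu₂ x]
      have h := hrep₂ (x ⬝ᵥ e) hx
      rw [hγ0] at h
      rw [h]
      simp
end

section
/- Let d ≥ 2 and let Ω ⊂ ℝ^d be a bounded, open, convex, nonempty set. There exists a constant C > 0 such that for every u ∈ C¹(closure(Ω)) with ∫_Ω u dx = 0, one has ‖u‖_{L²(Ω)} ≤ C · sup { |∫_Ω ∇u · ∇φ dx| : φ ∈ C¹(closure(Ω)), ∫_Ω (|φ|² + |∇φ|²) dx ≤ 1 }. -/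
/-!
For `x, y ∈ Ω` the segment `[x, y]` lies in `Ω`, so the fundamental theorem of calculus and Jensen
give `(u x - u y)² ≤ diam Ω² ∫₀¹ |∇u ((1 - t) x + t y)|² dt`. Integrating over `Ω × Ω`, the left
side becomes `2 |Ω| ‖u‖²` because `u` has mean zero. On the right, for each `t` one substitutes
first the variable whose coefficient is at least `1/2`, at the price of a Jacobian at most `2 ^ d`.
This is the Poincaré inequality `‖u‖² ≤ K ‖∇u‖²`. Testing the supremum with `φ = u / ‖u‖_{H¹}`
shows that it is at least `‖∇u‖² / ‖u‖_{H¹}`, and `‖u‖_{H¹}² ≤ (K + 1) ‖∇u‖²` then gives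
`‖u‖ ≤ (K + 1) · sup`.
-/

open MeasureTheory Set Module Metric
open scoped ENNReal

theorem sq_sub_le_integral_sq_of_hasDerivAt {f f' : ℝ → ℝ}
    (hf : ∀ t ∈ Icc (0 : ℝ) 1, HasDerivAt f (f' t) t) (hf' : ContinuousOn f' (Icc 0 1)) :
    (f 1 - f 0) ^ 2 ≤ ∫ t in (0 : ℝ)..1, f' t ^ 2 := by
  have hftc : ∫ t in (0 : ℝ)..1, f' t = f 1 - f 0 :=
    intervalIntegral.integral_eq_sub_of_hasDerivAt (by rwa [uIcc_of_le zero_le_one])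
      (hf'.intervalIntegrable_of_Icc zero_le_one)
  have : IsProbabilityMeasure (volume.restrict (Ioc (0 : ℝ) 1)) := ⟨by simp⟩
  rw [← hftc, intervalIntegral.integral_of_le zero_le_one,
    intervalIntegral.integral_of_le zero_le_one]
  exact even_two.convexOn_pow.map_integral_le (continuous_pow 2).continuousOn isClosed_univ
    (by simp) (hf'.integrableOn_Icc.mono_set Ioc_subset_Icc_self)
    ((hf'.pow 2).integrableOn_Icc.mono_set Ioc_subset_Icc_self)

theorem integral_prod_sub_sq {α : Type*} [MeasurableSpace α] {ν : Measure α} [IsFiniteMeasure ν]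
    {f : α → ℝ} (hf : Integrable f ν) (hf2 : Integrable (fun x => f x ^ 2) ν) :
    ∫ z, (f z.1 - f z.2) ^ 2 ∂ν.prod ν
      = 2 * ν.real univ * ∫ x, f x ^ 2 ∂ν - 2 * (∫ x, f x ∂ν) ^ 2 := by
  have h1 : Integrable (fun z : α × α => f z.1 ^ 2) (ν.prod ν) := hf2.comp_fst ν
  have h2 : Integrable (fun z : α × α => f z.2 ^ 2) (ν.prod ν) := hf2.comp_snd ν
  have h3 : Integrable (fun z : α × α => 2 * (f z.1 * f z.2)) (ν.prod ν) :=
    (hf.mul_prod hf).const_mul 2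
  calc ∫ z, (f z.1 - f z.2) ^ 2 ∂ν.prod ν
      = ∫ z, (f z.1 ^ 2 + f z.2 ^ 2 - 2 * (f z.1 * f z.2)) ∂ν.prod ν := by
        congr 1 with z; ring
    _ = _ := by
        rw [integral_sub (f := fun z => f z.1 ^ 2 + f z.2 ^ 2) (h1.add h2) h3,
          integral_add h1 h2, integral_const_mul, integral_prod_mul,
          integral_fun_fst (fun x => f x ^ 2), integral_fun_snd (fun x => f x ^ 2), smul_eq_mul]
        ring

theorem sqrt_le_mul_div_sqrt_add {a b K : ℝ} (ha : 0 ≤ a) (hb : 0 ≤ b) (hK : 0 ≤ K)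
    (hab : a ≤ K * b) : √a ≤ (K + 1) * (b / √(a + b)) := by
  rcases (add_nonneg ha hb).eq_or_lt with h | h
  · obtain rfl : a = 0 := by linarith
    obtain rfl : b = 0 := by linarith
    simp
  rw [mul_div_assoc', le_div_iff₀ (Real.sqrt_pos.2 h), ← Real.sqrt_mul ha]
  calc √(a * (a + b)) ≤ √(((K + 1) * b) ^ 2) :=
        Real.sqrt_le_sqrt (by
          rw [sq]; exact mul_le_mul (by linarith) (by linarith) h.le (by positivity))
    _ = (K + 1) * b := Real.sqrt_sq (by positivity)

theorem integrableOn_of_continuousOn_closure {X F : Type*} [MetricSpace X] [ProperSpace X]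
    [MeasurableSpace X] [OpensMeasurableSpace X] [NormedAddCommGroup F] (μ : Measure X)
    [IsFiniteMeasureOnCompacts μ] {Ω : Set X} (hΩb : Bornology.IsBounded Ω) {f : X → F}
    (hf : ContinuousOn f (closure Ω)) : IntegrableOn f Ω μ :=
  (hf.integrableOn_compact hΩb.isCompact_closure).mono_set subset_closure

section HaarScaling

variable {V : Type*} [NormedAddCommGroup V] [NormedSpace ℝ V] [FiniteDimensional ℝ V]
  [MeasurableSpace V] [BorelSpace V] (μ : Measure V) [μ.IsAddHaarMeasure]

theorem lintegral_comp_smul_add_le {G : V → ℝ≥0∞} (hG : Measurable G) {c : ℝ} (hc : 2⁻¹ ≤ c)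
    (w : V) : ∫⁻ x, G (c • x + w) ∂μ ≤ 2 ^ finrank ℝ V * ∫⁻ x, G x ∂μ := by
  have hc0 : c ≠ 0 := (lt_of_lt_of_le (by norm_num) hc).ne'
  calc ∫⁻ x, G (c • x + w) ∂μ = ∫⁻ x, G (x + w) ∂(Measure.map (c • ·) μ) :=
        (lintegral_map (hG.comp (measurable_add_const w)) (measurable_const_smul c)).symm
    _ = ENNReal.ofReal |(c ^ finrank ℝ V)⁻¹| * ∫⁻ x, G x ∂μ := by
        rw [Measure.map_addHaar_smul μ hc0, lintegral_smul_measure,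
          lintegral_add_right_eq_self G w, smul_eq_mul]
    _ ≤ 2 ^ finrank ℝ V * ∫⁻ x, G x ∂μ := by
        gcongr
        rw [abs_of_nonneg (by positivity), ← inv_pow, ENNReal.ofReal_pow (by positivity)]
        gcongr
        have hc' : c⁻¹ ≤ 2 := (inv_le_comm₀ (by linarith) two_pos).2 hc
        exact (ENNReal.ofReal_le_ofReal hc').trans_eq (ENNReal.ofReal_ofNat 2)

theorem lintegral_prod_comp_lineMap_le {G : V → ℝ≥0∞} (hG : Measurable G) (s : Set V) (t : ℝ) :
    ∫⁻ z, G ((1 - t) • z.1 + t • z.2) ∂(μ.restrict s).prod (μ.restrict s)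
      ≤ 2 ^ finrank ℝ V * μ s * ∫⁻ x, G x ∂μ := by
  have hmeas : Measurable fun z : V × V => G ((1 - t) • z.1 + t • z.2) := hG.comp (by fun_prop)
  have hslice : ∀ (c : ℝ) w, 2⁻¹ ≤ c →
      ∫⁻ x in s, G (c • x + w) ∂μ ≤ 2 ^ finrank ℝ V * ∫⁻ x, G x ∂μ := fun c w hc =>
    (setLIntegral_le_lintegral s _).trans (lintegral_comp_smul_add_le μ hG hc w)
  rcases le_total t 2⁻¹ with h | h
  · rw [lintegral_prod_symm _ hmeas.aemeasurable]
    calc ∫⁻ y in s, ∫⁻ x in s, G ((1 - t) • x + t • y) ∂μ ∂μ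
        ≤ ∫⁻ y in s, 2 ^ finrank ℝ V * ∫⁻ x, G x ∂μ ∂μ :=
          lintegral_mono fun y => hslice _ _ (by linarith)
      _ = _ := by rw [setLIntegral_const, mul_right_comm]
  · rw [lintegral_prod _ hmeas.aemeasurable]
    calc ∫⁻ x in s, ∫⁻ y in s, G ((1 - t) • x + t • y) ∂μ ∂μ
        ≤ ∫⁻ x in s, 2 ^ finrank ℝ V * ∫⁻ x, G x ∂μ ∂μ :=
          lintegral_mono fun x => by simpa only [add_comm] using hslice t ((1 - t) • x) h
      _ = _ := by rw [setLIntegral_const, mul_right_comm]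

end HaarScaling

variable {E : Type*} [NormedAddCommGroup E] [InnerProductSpace ℝ E]

/-- `C¹(closure Ω)`, modelled as `C¹` on some open neighbourhood of `closure Ω`. -/
def IsC1OnClosure (Ω : Set E) (u : E → ℝ) : Prop :=
  ∃ U : Set E, IsOpen U ∧ closure Ω ⊆ U ∧ ContDiffOn ℝ 1 u U

namespace IsC1OnClosure

variable {Ω : Set E} {u : E → ℝ}

theorem continuousOn (hu : IsC1OnClosure Ω u) : ContinuousOn u (closure Ω) :=
  let ⟨_, _, hΩU, huU⟩ := hu
  huU.continuousOn.mono hΩU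

theorem differentiableAt (hu : IsC1OnClosure Ω u) {x : E} (hx : x ∈ closure Ω) :
    DifferentiableAt ℝ u x :=
  let ⟨_, hU, hΩU, huU⟩ := hu
  (huU.differentiableOn one_ne_zero).differentiableAt (hU.mem_nhds (hΩU hx))

theorem const_mul (hu : IsC1OnClosure Ω u) (c : ℝ) : IsC1OnClosure Ω fun x => c * u x :=
  let ⟨U, hU, hΩU, huU⟩ := hu
  ⟨U, hU, hΩU, contDiffOn_const.mul huU⟩

end IsC1OnClosure

section Gradient

variable [CompleteSpace E]

theorem gradient_const_mul {u : E → ℝ} {x : E} (hu : DifferentiableAt ℝ u x) (c : ℝ) :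
    gradient (fun y => c * u y) x = c • gradient u x := by
  simp only [gradient, fderiv_const_mul hu c, map_smul]

theorem measurable_gradient [MeasurableSpace E] [BorelSpace E] [SecondCountableTopology E]
    (u : E → ℝ) : Measurable (gradient u) :=
  (InnerProductSpace.toDual ℝ E).symm.continuous.measurable.comp (measurable_fderiv ℝ u)

theorem ContDiffOn.continuousOn_gradient {U : Set E} {u : E → ℝ} (hU : IsOpen U)
    (hu : ContDiffOn ℝ 1 u U) : ContinuousOn (gradient u) U :=
  (InnerProductSpace.toDual ℝ E).symm.continuous.comp_continuousOn
    (hu.continuousOn_fderiv_of_isOpen hU le_rfl)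

theorem IsC1OnClosure.continuousOn_gradient {Ω : Set E} {u : E → ℝ} (hu : IsC1OnClosure Ω u) :
    ContinuousOn (gradient u) (closure Ω) :=
  let ⟨_, hU, hΩU, huU⟩ := hu
  (huU.continuousOn_gradient hU).mono hΩU

theorem sq_sub_le_mul_integral_norm_gradient_sq {U : Set E} {u : E → ℝ} (hU : IsOpen U)
    (hu : ContDiffOn ℝ 1 u U) {x y : E} (hxy : ∀ t ∈ Icc (0 : ℝ) 1, x + t • (y - x) ∈ U) :
    (u y - u x) ^ 2 ≤ ‖y - x‖ ^ 2 * ∫ t in (0 : ℝ)..1, ‖gradient u (x + t • (y - x))‖ ^ 2 := by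
  have hgrad : ContinuousOn (fun t : ℝ => gradient u (x + t • (y - x))) (Icc 0 1) :=
    (hu.continuousOn_gradient hU).comp (by fun_prop) hxy
  have hderiv : ∀ t ∈ Icc (0 : ℝ) 1, HasDerivAt (fun s : ℝ => u (x + s • (y - x)))
      (inner ℝ (gradient u (x + t • (y - x))) (y - x)) t := by
    intro t ht
    have hline : HasDerivAt (fun s : ℝ => x + s • (y - x)) (y - x) t := by
      simpa using ((hasDerivAt_id t).smul_const (y - x)).const_add x
    rw [inner_gradient_left]
    exact ((hu.differentiableOn one_ne_zero).differentiableAt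
      (hU.mem_nhds (hxy t ht))).hasFDerivAt.comp_hasDerivAt t hline
  have hinner_sq : ∀ t : ℝ, inner ℝ (gradient u (x + t • (y - x))) (y - x) ^ 2
      ≤ ‖y - x‖ ^ 2 * ‖gradient u (x + t • (y - x))‖ ^ 2 := fun t => by
    rw [← mul_pow, ← sq_abs, mul_comm]
    exact pow_le_pow_left₀ (abs_nonneg _) (abs_real_inner_le_norm _ _) 2
  calc (u y - u x) ^ 2 = (u (x + (1 : ℝ) • (y - x)) - u (x + (0 : ℝ) • (y - x))) ^ 2 := by
        simp
    _ ≤ ∫ t in (0 : ℝ)..1, inner ℝ (gradient u (x + t • (y - x))) (y - x) ^ 2 :=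
        sq_sub_le_integral_sq_of_hasDerivAt hderiv (hgrad.inner continuousOn_const)
    _ ≤ ∫ t in (0 : ℝ)..1, ‖y - x‖ ^ 2 * ‖gradient u (x + t • (y - x))‖ ^ 2 := by
        refine intervalIntegral.integral_mono_on zero_le_one ?_ ?_ fun t _ => hinner_sq t
        · exact ((hgrad.inner continuousOn_const).pow 2).intervalIntegrable_of_Icc zero_le_one
        · exact (continuousOn_const.mul (hgrad.norm.pow 2)).intervalIntegrable_of_Icc zero_le_one
    _ = _ := intervalIntegral.integral_const_mul _ _

theorem IsC1OnClosure.ofReal_sq_sub_le {Ω : Set E} {u : E → ℝ} (hu : IsC1OnClosure Ω u)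
    (hΩb : Bornology.IsBounded Ω) (hΩc : Convex ℝ Ω) {x y : E} (hx : x ∈ Ω) (hy : y ∈ Ω) :
    ENNReal.ofReal ((u x - u y) ^ 2) ≤ ENNReal.ofReal (diam Ω ^ 2) *
      ∫⁻ t in Ioc (0 : ℝ) 1,
        Ω.indicator (fun z => ENNReal.ofReal (‖gradient u z‖ ^ 2)) ((1 - t) • x + t • y) := by
  have hseg : ∀ t ∈ Icc (0 : ℝ) 1, x + t • (y - x) ∈ Ω := fun t ht =>
    hΩc.add_smul_sub_mem hx hy ht
  have hcont : ContinuousOn (fun t : ℝ => ‖gradient u (x + t • (y - x))‖ ^ 2) (Icc 0 1) :=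
    (hu.continuousOn_gradient.norm.pow 2).comp (by fun_prop) fun t ht => subset_closure (hseg t ht)
  obtain ⟨U, hU, hΩU, huU⟩ := hu
  have hreal := sq_sub_le_mul_integral_norm_gradient_sq hU huU fun t ht =>
    hΩU (subset_closure (hseg t ht))
  have hdist : ‖y - x‖ ^ 2 ≤ diam Ω ^ 2 := by
    gcongr; rw [← dist_eq_norm]; exact dist_le_diam_of_mem hΩb hy hx
  have hlintegral : ENNReal.ofReal (∫ t in (0 : ℝ)..1, ‖gradient u (x + t • (y - x))‖ ^ 2) =
      ∫⁻ t in Ioc (0 : ℝ) 1,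
        Ω.indicator (fun z => ENNReal.ofReal (‖gradient u z‖ ^ 2)) ((1 - t) • x + t • y) := by
    rw [intervalIntegral.integral_of_le zero_le_one, ofReal_integral_eq_lintegral_ofReal
      (hcont.integrableOn_Icc.mono_set Ioc_subset_Icc_self) (ae_of_all _ fun _ => sq_nonneg _)]
    refine setLIntegral_congr_fun measurableSet_Ioc fun t ht => ?_
    rw [show (1 - t) • x + t • y = x + t • (y - x) by module,
      indicator_of_mem (hseg t (Ioc_subset_Icc_self ht))]
  calc ENNReal.ofReal ((u x - u y) ^ 2)
      ≤ ENNReal.ofReal (diam Ω ^ 2 * ∫ t in (0 : ℝ)..1, ‖gradient u (x + t • (y - x))‖ ^ 2) := by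
        refine ENNReal.ofReal_le_ofReal ?_
        rw [sub_sq_comm]
        exact hreal.trans (mul_le_mul_of_nonneg_right hdist
          (intervalIntegral.integral_nonneg zero_le_one fun _ _ => sq_nonneg _))
    _ = _ := by rw [ENNReal.ofReal_mul (sq_nonneg _), hlintegral]

/-- Its supremum is the dual `H¹` norm of the functional `φ ↦ ∫_Ω ∇u · ∇φ`. -/
def gradientPairings [MeasurableSpace E] (μ : Measure E) (Ω : Set E) (u : E → ℝ) : Set ℝ :=
  {r : ℝ | ∃ φ : E → ℝ, IsC1OnClosure Ω φ ∧
    (∫ x in Ω, ((φ x) ^ 2 + ‖gradient φ x‖ ^ 2) ∂μ) ≤ 1 ∧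
    r = |∫ x in Ω, (inner ℝ (gradient u x) (gradient φ x) : ℝ) ∂μ|}

end Gradient

section Pairing

variable [ProperSpace E] [MeasurableSpace E] [BorelSpace E] (μ : Measure E)
  [IsFiniteMeasureOnCompacts μ] {Ω : Set E} {u : E → ℝ}

theorem bddAbove_gradientPairings (hΩb : Bornology.IsBounded Ω) (hu : IsC1OnClosure Ω u) :
    BddAbove (gradientPairings μ Ω u) := by
  refine ⟨(∫ x in Ω, ‖gradient u x‖ ^ 2 ∂μ + 1) / 2, ?_⟩
  rintro r ⟨φ, hφ, hφ_norm, rfl⟩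
  have hu_int : IntegrableOn (fun x => ‖gradient u x‖ ^ 2) Ω μ :=
    integrableOn_of_continuousOn_closure μ hΩb (hu.continuousOn_gradient.norm.pow 2)
  have hφ_int : IntegrableOn (fun x => φ x ^ 2 + ‖gradient φ x‖ ^ 2) Ω μ :=
    integrableOn_of_continuousOn_closure μ hΩb
      ((hφ.continuousOn.pow 2).add (hφ.continuousOn_gradient.norm.pow 2))
  have hbound : ∀ x, ‖(inner ℝ (gradient u x) (gradient φ x) : ℝ)‖
      ≤ (‖gradient u x‖ ^ 2 + (φ x ^ 2 + ‖gradient φ x‖ ^ 2)) / 2 := fun x => by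
    rw [Real.norm_eq_abs]
    nlinarith [abs_real_inner_le_norm (gradient u x) (gradient φ x),
      sq_nonneg (‖gradient u x‖ - ‖gradient φ x‖), sq_nonneg (φ x)]
  calc |∫ x in Ω, (inner ℝ (gradient u x) (gradient φ x) : ℝ) ∂μ|
      ≤ ∫ x in Ω, (‖gradient u x‖ ^ 2 + (φ x ^ 2 + ‖gradient φ x‖ ^ 2)) / 2 ∂μ :=
        norm_integral_le_of_norm_le ((hu_int.add hφ_int).div_const 2) (ae_of_all _ hbound)
    _ = (∫ x in Ω, ‖gradient u x‖ ^ 2 ∂μ + ∫ x in Ω, (φ x ^ 2 + ‖gradient φ x‖ ^ 2) ∂μ) / 2 := by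
        rw [integral_div, integral_add hu_int hφ_int]
    _ ≤ (∫ x in Ω, ‖gradient u x‖ ^ 2 ∂μ + 1) / 2 := by gcongr

theorem div_sqrt_le_sSup_gradientPairings (hΩm : MeasurableSet Ω) (hΩb : Bornology.IsBounded Ω)
    (hu : IsC1OnClosure Ω u) :
    (∫ x in Ω, ‖gradient u x‖ ^ 2 ∂μ) /
        √(∫ x in Ω, u x ^ 2 ∂μ + ∫ x in Ω, ‖gradient u x‖ ^ 2 ∂μ)
      ≤ sSup (gradientPairings μ Ω u) := by
  -- If `M = 0` then `M⁻¹ = 0`, the test function is `0`, and no case split is needed.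
  set M := √(∫ x in Ω, u x ^ 2 ∂μ + ∫ x in Ω, ‖gradient u x‖ ^ 2 ∂μ)
  have hgrad : ∀ x ∈ Ω, gradient (fun y => M⁻¹ * u y) x = M⁻¹ • gradient u x := fun x hx =>
    gradient_const_mul (hu.differentiableAt (subset_closure hx)) _
  refine le_csSup (bddAbove_gradientPairings μ hΩb hu) ⟨fun x => M⁻¹ * u x, hu.const_mul _, ?_, ?_⟩
  · have hM_sq : M ^ 2 = ∫ x in Ω, u x ^ 2 ∂μ + ∫ x in Ω, ‖gradient u x‖ ^ 2 ∂μ :=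
      Real.sq_sqrt (add_nonneg (integral_nonneg fun _ => sq_nonneg _)
        (integral_nonneg fun _ => sq_nonneg _))
    calc ∫ x in Ω, ((M⁻¹ * u x) ^ 2 + ‖gradient (fun y => M⁻¹ * u y) x‖ ^ 2) ∂μ
        = ∫ x in Ω, M⁻¹ ^ 2 * (u x ^ 2 + ‖gradient u x‖ ^ 2) ∂μ := by
          refine setIntegral_congr_fun hΩm fun x hx => ?_
          rw [hgrad x hx, norm_smul, Real.norm_eq_abs]
          ring_nf; rw [sq_abs]
      _ = (M⁻¹ * M) ^ 2 := by
          rw [integral_const_mul,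
            integral_add (f := fun x => u x ^ 2) (g := fun x => ‖gradient u x‖ ^ 2)
            (integrableOn_of_continuousOn_closure μ hΩb (hu.continuousOn.pow 2))
            (integrableOn_of_continuousOn_closure μ hΩb (hu.continuousOn_gradient.norm.pow 2)),
            mul_pow, hM_sq]
      _ ≤ 1 := pow_le_one₀ (by positivity) (inv_mul_le_one_of_le₀ le_rfl (by positivity))
  · have hpairing : ∫ x in Ω, (inner ℝ (gradient u x) (gradient (fun y => M⁻¹ * u y) x) : ℝ) ∂μ
        = M⁻¹ * ∫ x in Ω, ‖gradient u x‖ ^ 2 ∂μ := by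
      rw [← integral_const_mul]
      refine setIntegral_congr_fun hΩm fun x hx => ?_
      rw [hgrad x hx, real_inner_smul_right, real_inner_self_eq_norm_sq]
    rw [hpairing, abs_of_nonneg (mul_nonneg (inv_nonneg.2 (Real.sqrt_nonneg _))
      (integral_nonneg fun _ => sq_nonneg _)), inv_mul_eq_div]

end Pairing

section Poincare

variable [FiniteDimensional ℝ E] [MeasurableSpace E] [BorelSpace E] (μ : Measure E)
  [μ.IsAddHaarMeasure]

theorem lintegral_prod_ofReal_sq_sub_le {Ω : Set E} (hΩm : MeasurableSet Ω)
    (hΩb : Bornology.IsBounded Ω) (hΩc : Convex ℝ Ω) {u : E → ℝ} (hu : IsC1OnClosure Ω u) :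
    ∫⁻ z, ENNReal.ofReal ((u z.1 - u z.2) ^ 2) ∂(μ.restrict Ω).prod (μ.restrict Ω)
      ≤ ENNReal.ofReal (diam Ω ^ 2) *
        (2 ^ finrank ℝ E * μ Ω * ∫⁻ x in Ω, ENNReal.ofReal (‖gradient u x‖ ^ 2) ∂μ) := by
  set G : E → ℝ≥0∞ := Ω.indicator fun z => ENNReal.ofReal (‖gradient u z‖ ^ 2)
  have hG : Measurable G :=
    (ENNReal.measurable_ofReal.comp ((measurable_gradient u).norm.pow_const 2)).indicator hΩm
  have hmeas : Measurable (Function.uncurry fun (z : E × E) (t : ℝ) =>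
      G ((1 - t) • z.1 + t • z.2)) := hG.comp (by fun_prop)
  have hae : ∀ᵐ z ∂(μ.restrict Ω).prod (μ.restrict Ω), z ∈ Ω ×ˢ Ω := by
    rw [Measure.prod_restrict]; exact ae_restrict_mem (hΩm.prod hΩm)
  rw [← lintegral_indicator hΩm]
  calc _ ≤ ∫⁻ z, ENNReal.ofReal (diam Ω ^ 2) * (∫⁻ t in Ioc (0 : ℝ) 1, G ((1 - t) • z.1 + t • z.2))
          ∂(μ.restrict Ω).prod (μ.restrict Ω) :=
        lintegral_mono_ae (hae.mono fun z hz => hu.ofReal_sq_sub_le hΩb hΩc hz.1 hz.2)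
    _ = ENNReal.ofReal (diam Ω ^ 2) * ∫⁻ t in Ioc (0 : ℝ) 1,
          ∫⁻ z, G ((1 - t) • z.1 + t • z.2) ∂(μ.restrict Ω).prod (μ.restrict Ω) := by
        rw [lintegral_const_mul' _ _ ENNReal.ofReal_ne_top,
          lintegral_lintegral_swap hmeas.aemeasurable]
    _ ≤ ENNReal.ofReal (diam Ω ^ 2) *
          ∫⁻ t in Ioc (0 : ℝ) 1, 2 ^ finrank ℝ E * μ Ω * ∫⁻ x, G x ∂μ := by
        gcongr with t
        exact lintegral_prod_comp_lineMap_le μ hG Ω t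
    _ = _ := by rw [setLIntegral_const, Real.volume_Ioc, sub_zero, ENNReal.ofReal_one, mul_one]

theorem two_mul_measureReal_mul_integral_sq_le {Ω : Set E} (hΩm : MeasurableSet Ω)
    (hΩb : Bornology.IsBounded Ω) (hΩc : Convex ℝ Ω) {u : E → ℝ} (hu : IsC1OnClosure Ω u)
    (hmean : ∫ x in Ω, u x ∂μ = 0) :
    2 * μ.real Ω * ∫ x in Ω, u x ^ 2 ∂μ
      ≤ 2 ^ finrank ℝ E * diam Ω ^ 2 * μ.real Ω * ∫ x in Ω, ‖gradient u x‖ ^ 2 ∂μ := by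
  have : IsFiniteMeasure (μ.restrict Ω) := isFiniteMeasure_restrict.2 hΩb.measure_lt_top.ne
  have hu_meas : AEStronglyMeasurable u (μ.restrict Ω) :=
    (hu.continuousOn.mono subset_closure).aestronglyMeasurable hΩm
  have hgrad_sq : ∫⁻ x in Ω, ENNReal.ofReal (‖gradient u x‖ ^ 2) ∂μ
      = ENNReal.ofReal (∫ x in Ω, ‖gradient u x‖ ^ 2 ∂μ) :=
    (ofReal_integral_eq_lintegral_ofReal
      (integrableOn_of_continuousOn_closure μ hΩb (hu.continuousOn_gradient.norm.pow 2))
      (ae_of_all _ fun _ => sq_nonneg _)).symm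
  have hbound := lintegral_prod_ofReal_sq_sub_le μ hΩm hΩb hΩc hu
  rw [hgrad_sq] at hbound
  calc 2 * μ.real Ω * ∫ x in Ω, u x ^ 2 ∂μ
      = ∫ z, (u z.1 - u z.2) ^ 2 ∂(μ.restrict Ω).prod (μ.restrict Ω) := by
        rw [integral_prod_sub_sq (integrableOn_of_continuousOn_closure μ hΩb hu.continuousOn)
          (integrableOn_of_continuousOn_closure μ hΩb (hu.continuousOn.pow 2)), hmean,
          measureReal_restrict_apply_univ]
        ring
    _ = (∫⁻ z, ENNReal.ofReal ((u z.1 - u z.2) ^ 2)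
          ∂(μ.restrict Ω).prod (μ.restrict Ω)).toReal :=
        integral_eq_lintegral_of_nonneg_ae (ae_of_all _ fun _ => sq_nonneg _)
          ((hu_meas.comp_fst.sub hu_meas.comp_snd).pow 2)
    _ ≤ (ENNReal.ofReal (diam Ω ^ 2) * (2 ^ finrank ℝ E * μ Ω *
          ENNReal.ofReal (∫ x in Ω, ‖gradient u x‖ ^ 2 ∂μ))).toReal :=
        ENNReal.toReal_mono (ENNReal.mul_ne_top ENNReal.ofReal_ne_top
          (ENNReal.mul_ne_top (ENNReal.mul_ne_top (by simp) hΩb.measure_lt_top.ne)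
            ENNReal.ofReal_ne_top)) hbound
    _ = _ := by
        simp only [ENNReal.toReal_mul, ENNReal.toReal_ofReal (sq_nonneg _),
          ENNReal.toReal_ofReal (integral_nonneg fun _ => sq_nonneg _), ENNReal.toReal_pow,
          ENNReal.toReal_ofNat, measureReal_def]
        ring

theorem integral_sq_le_of_integral_eq_zero {Ω : Set E} (hΩm : MeasurableSet Ω)
    (hΩb : Bornology.IsBounded Ω) (hΩc : Convex ℝ Ω) {u : E → ℝ} (hu : IsC1OnClosure Ω u)
    (hmean : ∫ x in Ω, u x ∂μ = 0) :
    ∫ x in Ω, u x ^ 2 ∂μ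
      ≤ 2 ^ finrank ℝ E * diam Ω ^ 2 / 2 * ∫ x in Ω, ‖gradient u x‖ ^ 2 ∂μ := by
  have h := two_mul_measureReal_mul_integral_sq_le μ hΩm hΩb hΩc hu hmean
  rcases measureReal_nonneg.eq_or_lt with hm | hm
  · rw [Measure.restrict_eq_zero.2 ((measureReal_eq_zero_iff hΩb.measure_lt_top.ne).1 hm.symm)]
    simp
  · refine le_of_mul_le_mul_left ?_ hm
    linarith

end Poincare

theorem L2_le_dualH1_of_gradient_general
    (d : ℕ)
    (Ω : Set (EuclideanSpace ℝ (Fin d)))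
    (hΩo : IsOpen Ω) (hΩb : Bornology.IsBounded Ω) (hΩc : Convex ℝ Ω) :
    ∃ C : ℝ, 0 < C ∧
      ∀ u : EuclideanSpace ℝ (Fin d) → ℝ,
        (∃ U : Set (EuclideanSpace ℝ (Fin d)), IsOpen U ∧ closure Ω ⊆ U ∧ ContDiffOn ℝ 1 u U) →
        (∫ x in Ω, u x) = 0 →
        Real.sqrt (∫ x in Ω, (u x) ^ 2) ≤
          C * sSup {r : ℝ | ∃ φ : EuclideanSpace ℝ (Fin d) → ℝ,
            (∃ U : Set (EuclideanSpace ℝ (Fin d)),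
              IsOpen U ∧ closure Ω ⊆ U ∧ ContDiffOn ℝ 1 φ U) ∧
            (∫ x in Ω, ((φ x) ^ 2 + ‖gradient φ x‖ ^ 2)) ≤ 1 ∧
            r = |∫ x in Ω, (inner ℝ (gradient u x) (gradient φ x) : ℝ)|} := by
  set K : ℝ := 2 ^ d * diam Ω ^ 2 / 2
  refine ⟨K + 1, by positivity, fun u hu hmean => ?_⟩
  have hpoincare : ∫ x in Ω, u x ^ 2 ≤ K * ∫ x in Ω, ‖gradient u x‖ ^ 2 := by
    simpa only [finrank_euclideanSpace_fin] using
      integral_sq_le_of_integral_eq_zero volume hΩo.measurableSet hΩb hΩc hu hmean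
  calc √(∫ x in Ω, u x ^ 2)
      ≤ (K + 1) * ((∫ x in Ω, ‖gradient u x‖ ^ 2) /
          √((∫ x in Ω, u x ^ 2) + ∫ x in Ω, ‖gradient u x‖ ^ 2)) :=
        sqrt_le_mul_div_sqrt_add (integral_nonneg fun _ => sq_nonneg _)
          (integral_nonneg fun _ => sq_nonneg _) (by positivity) hpoincare
    _ ≤ (K + 1) * sSup (gradientPairings volume Ω u) := by
        gcongr
        exact div_sqrt_le_sSup_gradientPairings volume hΩo.measurableSet hΩb hu

/-- For a bounded convex open set `Ω ⊂ ℝ^d`, the `L²` norm of a mean-zero `C¹(closure Ω)`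
function is controlled by the dual-`H¹` norm of its gradient:
`‖u‖_{L²(Ω)} ≤ C sup { |∫_Ω ∇u·∇φ| : φ ∈ C¹(closure Ω), ∫_Ω (|φ|² + |∇φ|²) ≤ 1 }`. -/
theorem L2_le_dualH1_of_gradient
    (d : ℕ) (hd : 2 ≤ d)
    (Ω : Set (EuclideanSpace ℝ (Fin d)))
    (hΩo : IsOpen Ω) (hΩb : Bornology.IsBounded Ω) (hΩc : Convex ℝ Ω) (hΩne : Ω.Nonempty) :
    ∃ C : ℝ, 0 < C ∧
      ∀ u : EuclideanSpace ℝ (Fin d) → ℝ,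
        (∃ U : Set (EuclideanSpace ℝ (Fin d)), IsOpen U ∧ closure Ω ⊆ U ∧ ContDiffOn ℝ 1 u U) →
        (∫ x in Ω, u x) = 0 →
        Real.sqrt (∫ x in Ω, (u x) ^ 2) ≤
          C * sSup {r : ℝ | ∃ φ : EuclideanSpace ℝ (Fin d) → ℝ,
            (∃ U : Set (EuclideanSpace ℝ (Fin d)),
              IsOpen U ∧ closure Ω ⊆ U ∧ ContDiffOn ℝ 1 φ U) ∧
            (∫ x in Ω, ((φ x) ^ 2 + ‖gradient φ x‖ ^ 2)) ≤ 1 ∧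
            r = |∫ x in Ω, (inner ℝ (gradient u x) (gradient φ x) : ℝ)|} :=
  L2_le_dualH1_of_gradient_general d Ω hΩo hΩb hΩc
end

section
/- Let d ≥ 1, let Ω ⊂ ℝ^d be a bounded, open, nonempty set, and let γ₁ < γ₂ be real numbers. Suppose (u_n) ⊂ L²_loc(Ω) and u ∈ L²_loc(Ω) satisfy: u_n → u in L²(K) for every compact subset K of Ω, and sup_n ∫_Ω d_{∂Ω}(x)^{γ₁} |u_n(x)|² dx < +∞. Then ∫_Ω d_{∂Ω}(x)^{γ₂} |u_n(x) − u(x)|² dx → 0 as n → +∞. -/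
open MeasureTheory Metric Filter Set Topology
open scoped ENNReal

/-! Write `δ` for the distance to `∂Ω`. Far from the boundary, on `{δ ≥ ε}` (a compact subset
of `Ω`), the weight `δ^γ₂` is bounded and `L²_loc` convergence takes over. Near the boundary,
`δ^γ₂ ≤ ε^(γ₂-γ₁) δ^γ₁`, so that part is at most `ε^(γ₂-γ₁)` times a uniform bound on the
`δ^γ₁`-weighted norms of `u_n - u`; that bound follows from the hypothesis once `u` itself is
shown, by exhausting `Ω` with the sets `{δ ≥ ε}`, to lie in `L²(δ^γ₁, Ω)`. -/

section WeightedSqIntegral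

variable {X : Type*} [MeasurableSpace X] {μ ν : Measure X}

/-- `weightedSqIntegral μ g f = ‖f‖²_{L²(g, μ)}`. -/
noncomputable def weightedSqIntegral (μ : Measure X) (g f : X → ℝ) : ℝ≥0∞ :=
  ∫⁻ x, ENNReal.ofReal (g x * f x ^ 2) ∂μ

lemma ENNReal.ofReal_mul_sq_sub_le (c a b : ℝ) :
    ENNReal.ofReal (c * (a - b) ^ 2) ≤
      2 * ENNReal.ofReal (c * a ^ 2) + 2 * ENNReal.ofReal (c * b ^ 2) := by
  rcases le_or_gt 0 c with hc | hc
  · calc ENNReal.ofReal (c * (a - b) ^ 2)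
        ≤ ENNReal.ofReal (2 * (c * a ^ 2) + 2 * (c * b ^ 2)) :=
          ENNReal.ofReal_le_ofReal (by nlinarith [mul_nonneg hc (sq_nonneg (a + b))])
      _ ≤ ENNReal.ofReal (2 * (c * a ^ 2)) + ENNReal.ofReal (2 * (c * b ^ 2)) :=
          ENNReal.ofReal_add_le
      _ = _ := by simp only [ENNReal.ofReal_mul zero_le_two, ENNReal.ofReal_ofNat]
  · rw [ENNReal.ofReal_of_nonpos (mul_nonpos_of_nonpos_of_nonneg hc.le (sq_nonneg _))]
    exact zero_le

lemma weightedSqIntegral_sub_le {g f h : X → ℝ} (hg : AEMeasurable g μ)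
    (hf : AEMeasurable f μ) :
    weightedSqIntegral μ g (f - h) ≤
      2 * weightedSqIntegral μ g f + 2 * weightedSqIntegral μ g h := by
  calc weightedSqIntegral μ g (f - h)
      ≤ ∫⁻ x, (2 * ENNReal.ofReal (g x * f x ^ 2) + 2 * ENNReal.ofReal (g x * h x ^ 2)) ∂μ :=
        lintegral_mono fun x => ENNReal.ofReal_mul_sq_sub_le _ _ _
    _ = _ := by
      rw [lintegral_add_left' (by fun_prop), lintegral_const_mul' _ _ ENNReal.ofNat_ne_top,
        lintegral_const_mul' _ _ ENNReal.ofNat_ne_top]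
      rfl

lemma weightedSqIntegral_mono_measure (hμν : μ ≤ ν) (g f : X → ℝ) :
    weightedSqIntegral μ g f ≤ weightedSqIntegral ν g f :=
  lintegral_mono' hμν le_rfl

lemma weightedSqIntegral_le_const_mul {g f : X → ℝ} {c : ℝ} (h : ∀ᵐ x ∂μ, g x ≤ c) :
    weightedSqIntegral μ g f ≤ ENNReal.ofReal c * ∫⁻ x, ENNReal.ofReal (f x ^ 2) ∂μ := by
  rw [← lintegral_const_mul' _ _ ENNReal.ofReal_ne_top]
  refine lintegral_mono_ae (h.mono fun x hx => ?_)
  rw [← ENNReal.ofReal_mul' (sq_nonneg _)]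
  exact ENNReal.ofReal_le_ofReal (mul_le_mul_of_nonneg_right hx (sq_nonneg _))

lemma weightedSqIntegral_le_mul {g g' f : X → ℝ} {c : ℝ} (hc : 0 ≤ c)
    (h : ∀ᵐ x ∂μ, g x ≤ c * g' x) :
    weightedSqIntegral μ g f ≤ ENNReal.ofReal c * weightedSqIntegral μ g' f := by
  rw [weightedSqIntegral, weightedSqIntegral, ← lintegral_const_mul' _ _ ENNReal.ofReal_ne_top]
  refine lintegral_mono_ae (h.mono fun x hx => ?_)
  rw [← ENNReal.ofReal_mul hc, ← mul_assoc]
  exact ENNReal.ofReal_le_ofReal (mul_le_mul_of_nonneg_right hx (sq_nonneg _))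

end WeightedSqIntegral

lemma Real.rpow_le_max_of_mem_Icc {ε R t : ℝ} (γ : ℝ) (hε : 0 < ε) (ht : t ∈ Icc ε R) :
    t ^ γ ≤ max (ε ^ γ) (R ^ γ) := by
  rcases le_total 0 γ with hγ | hγ
  · exact le_max_of_le_right (Real.rpow_le_rpow (hε.le.trans ht.1) ht.2 hγ)
  · exact le_max_of_le_left (Real.rpow_le_rpow_of_nonpos hε ht.1 hγ)

lemma Real.rpow_le_rpow_sub_mul_rpow {ε t γ₁ γ₂ : ℝ} (ht : 0 < t) (htε : t ≤ ε)
    (hγ : γ₁ ≤ γ₂) : t ^ γ₂ ≤ ε ^ (γ₂ - γ₁) * t ^ γ₁ := by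
  calc t ^ γ₂ = t ^ (γ₂ - γ₁) * t ^ γ₁ := by rw [← Real.rpow_add ht, sub_add_cancel]
    _ ≤ ε ^ (γ₂ - γ₁) * t ^ γ₁ := by gcongr

section Exhaustion

variable {X : Type*} [MeasurableSpace X] {μ : Measure X} {w : X → ℝ} {R : ℝ}

lemma tendsto_weightedSqIntegral_restrict_setOf_le {f : ℕ → X → ℝ} {ε : ℝ} (γ : ℝ)
    (hw : Measurable w) (hR : ∀ᵐ x ∂μ, w x ≤ R) (hε : 0 < ε)
    (hf : Tendsto (fun n => ∫⁻ x in {x | ε ≤ w x}, ENNReal.ofReal (f n x ^ 2) ∂μ)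
      atTop (𝓝 0)) :
    Tendsto (fun n => weightedSqIntegral (μ.restrict {x | ε ≤ w x}) (fun x => w x ^ γ) (f n))
      atTop (𝓝 0) := by
  have hbound : ∀ᵐ x ∂μ.restrict {x | ε ≤ w x}, w x ^ γ ≤ max (ε ^ γ) (R ^ γ) := by
    filter_upwards [ae_restrict_mem (measurableSet_le measurable_const hw),
      ae_restrict_of_ae hR] with x hεx hxR
    exact Real.rpow_le_max_of_mem_Icc γ hε ⟨hεx, hxR⟩
  have hlim := ENNReal.Tendsto.const_mul hf (Or.inr (ENNReal.ofReal_ne_top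
    (r := max (ε ^ γ) (R ^ γ))))
  rw [mul_zero] at hlim
  exact tendsto_of_tendsto_of_tendsto_of_le_of_le tendsto_const_nhds hlim
    (fun _ => zero_le) fun _ => weightedSqIntegral_le_const_mul hbound

variable {γ γ₁ γ₂ : ℝ} {u : ℕ → X → ℝ} {v : X → ℝ} {M : ℝ≥0∞}

lemma weightedSqIntegral_le_two_mul_of_tendsto (hw : Measurable w) (hpos : ∀ᵐ x ∂μ, 0 < w x)
    (hR : ∀ᵐ x ∂μ, w x ≤ R) (hu : ∀ n, AEMeasurable (u n) μ)
    (hM : ∀ n, weightedSqIntegral μ (fun x => w x ^ γ) (u n) ≤ M)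
    (hconv : ∀ ε > 0, Tendsto (fun n => ∫⁻ x in {x | ε ≤ w x},
      ENNReal.ofReal ((u n x - v x) ^ 2) ∂μ) atTop (𝓝 0)) :
    weightedSqIntegral μ (fun x => w x ^ γ) v ≤ 2 * M := by
  have hlevel : ∀ ε > 0,
      weightedSqIntegral (μ.restrict {x | ε ≤ w x}) (fun x => w x ^ γ) v ≤ 2 * M := by
    intro ε hε
    have hlim := (ENNReal.Tendsto.const_mul
      (tendsto_weightedSqIntegral_restrict_setOf_le γ hw hR hε (hconv ε hε))
      (a := 2) (Or.inr ENNReal.ofNat_ne_top)).add_const (2 * M)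
    rw [mul_zero, zero_add] at hlim
    refine ge_of_tendsto' hlim fun n => ?_
    calc weightedSqIntegral (μ.restrict {x | ε ≤ w x}) (fun x => w x ^ γ) v
        = weightedSqIntegral (μ.restrict {x | ε ≤ w x}) (fun x => w x ^ γ) (u n - (u n - v)) :=
          by rw [sub_sub_cancel]
      _ ≤ 2 * weightedSqIntegral (μ.restrict {x | ε ≤ w x}) (fun x => w x ^ γ) (u n) +
            2 * weightedSqIntegral (μ.restrict {x | ε ≤ w x}) (fun x => w x ^ γ) (u n - v) :=
          weightedSqIntegral_sub_le (hw.pow_const γ).aemeasurable (hu n).restrict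
      _ ≤ 2 * weightedSqIntegral (μ.restrict {x | ε ≤ w x}) (fun x => w x ^ γ) (u n - v) +
            2 * M := by
          rw [add_comm]
          gcongr
          exact (weightedSqIntegral_mono_measure Measure.restrict_le_self _ _).trans (hM n)
  have hexhaust : μ.restrict (⋃ m : ℕ, {x | 1 / ((m : ℝ) + 1) ≤ w x}) = μ :=
    Measure.restrict_eq_self_of_ae_mem <| hpos.mono fun x hx =>
      mem_iUnion.2 ((exists_nat_one_div_lt hx).imp fun _ => le_of_lt)
  have hmono : Monotone fun m : ℕ => {x | 1 / ((m : ℝ) + 1) ≤ w x} := fun a b hab x hx =>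
    show 1 / ((b : ℝ) + 1) ≤ w x from le_trans (by gcongr) hx
  rw [weightedSqIntegral, ← hexhaust, setLIntegral_iUnion_of_directed _ hmono.directed_le]
  exact iSup_le fun m => hlevel _ (by positivity)

lemma limsup_weightedSqIntegral_le {f : ℕ → X → ℝ} {C : ℝ≥0∞} {ε : ℝ}
    (hw : Measurable w) (hpos : ∀ᵐ x ∂μ, 0 < w x) (hR : ∀ᵐ x ∂μ, w x ≤ R) (hγ : γ₁ ≤ γ₂)
    (hε : 0 < ε) (hC : ∀ n, weightedSqIntegral μ (fun x => w x ^ γ₁) (f n) ≤ C)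
    (hconv : Tendsto (fun n => ∫⁻ x in {x | ε ≤ w x}, ENNReal.ofReal (f n x ^ 2) ∂μ)
      atTop (𝓝 0)) :
    limsup (fun n => weightedSqIntegral μ (fun x => w x ^ γ₂) (f n)) atTop ≤
      ENNReal.ofReal (ε ^ (γ₂ - γ₁)) * C := by
  set A := {x | ε ≤ w x}
  have hA : MeasurableSet A := measurableSet_le measurable_const hw
  have hnear : ∀ᵐ x ∂μ.restrict Aᶜ, w x ^ γ₂ ≤ ε ^ (γ₂ - γ₁) * w x ^ γ₁ := by
    filter_upwards [ae_restrict_mem hA.compl, ae_restrict_of_ae hpos] with x (hxA : ¬ε ≤ w x) hx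
    exact Real.rpow_le_rpow_sub_mul_rpow hx (not_le.1 hxA).le hγ
  have hsplit : ∀ n, weightedSqIntegral μ (fun x => w x ^ γ₂) (f n) ≤
      weightedSqIntegral (μ.restrict A) (fun x => w x ^ γ₂) (f n) +
        ENNReal.ofReal (ε ^ (γ₂ - γ₁)) * C := by
    intro n
    calc weightedSqIntegral μ (fun x => w x ^ γ₂) (f n)
        = weightedSqIntegral (μ.restrict A) (fun x => w x ^ γ₂) (f n) +
            weightedSqIntegral (μ.restrict Aᶜ) (fun x => w x ^ γ₂) (f n) :=
          (lintegral_add_compl _ hA).symm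
      _ ≤ weightedSqIntegral (μ.restrict A) (fun x => w x ^ γ₂) (f n) +
            ENNReal.ofReal (ε ^ (γ₂ - γ₁)) *
              weightedSqIntegral (μ.restrict Aᶜ) (fun x => w x ^ γ₁) (f n) := by
          gcongr
          exact weightedSqIntegral_le_mul (Real.rpow_nonneg hε.le _) hnear
      _ ≤ _ := by
          gcongr
          exact (weightedSqIntegral_mono_measure Measure.restrict_le_self _ _).trans (hC n)
  have hlim := (tendsto_weightedSqIntegral_restrict_setOf_le γ₂ hw hR hε hconv).add_const
    (ENNReal.ofReal (ε ^ (γ₂ - γ₁)) * C)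
  rw [zero_add] at hlim
  exact (limsup_le_limsup (Eventually.of_forall hsplit)).trans_eq hlim.limsup_eq

lemma tendsto_weightedSqIntegral_of_bounded {f : ℕ → X → ℝ} {C : ℝ≥0∞}
    (hw : Measurable w) (hpos : ∀ᵐ x ∂μ, 0 < w x) (hR : ∀ᵐ x ∂μ, w x ≤ R) (hγ : γ₁ < γ₂)
    (hC : ∀ n, weightedSqIntegral μ (fun x => w x ^ γ₁) (f n) ≤ C) (hC' : C ≠ ∞)
    (hconv : ∀ ε > 0, Tendsto (fun n => ∫⁻ x in {x | ε ≤ w x}, ENNReal.ofReal (f n x ^ 2) ∂μ)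
      atTop (𝓝 0)) :
    Tendsto (fun n => weightedSqIntegral μ (fun x => w x ^ γ₂) (f n)) atTop (𝓝 0) := by
  have hpow : Tendsto (fun ε : ℝ => ε ^ (γ₂ - γ₁)) (𝓝[>] 0) (𝓝 0) := by
    have := (Real.continuousAt_rpow_const 0 (γ₂ - γ₁) (Or.inr (sub_pos.2 hγ).le)).tendsto
    rw [Real.zero_rpow (sub_pos.2 hγ).ne'] at this
    exact this.mono_left nhdsWithin_le_nhds
  have hsmall := ENNReal.Tendsto.mul_const (ENNReal.tendsto_ofReal hpow) (Or.inr hC')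
  rw [ENNReal.ofReal_zero, zero_mul] at hsmall
  refine tendsto_of_le_liminf_of_limsup_le zero_le (ge_of_tendsto hsmall ?_)
  filter_upwards [self_mem_nhdsWithin] with ε hε
  exact limsup_weightedSqIntegral_le hw hpos hR hγ.le hε hC (hconv ε hε)

lemma tendsto_weightedSqIntegral_sub (hw : Measurable w) (hpos : ∀ᵐ x ∂μ, 0 < w x)
    (hR : ∀ᵐ x ∂μ, w x ≤ R) (hγ : γ₁ < γ₂) (hu : ∀ n, AEMeasurable (u n) μ)
    (hM : ∀ n, weightedSqIntegral μ (fun x => w x ^ γ₁) (u n) ≤ M) (hM' : M ≠ ∞)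
    (hconv : ∀ ε > 0, Tendsto (fun n => ∫⁻ x in {x | ε ≤ w x},
      ENNReal.ofReal ((u n x - v x) ^ 2) ∂μ) atTop (𝓝 0)) :
    Tendsto (fun n => weightedSqIntegral μ (fun x => w x ^ γ₂) (u n - v)) atTop (𝓝 0) := by
  have hv := weightedSqIntegral_le_two_mul_of_tendsto hw hpos hR hu hM hconv
  refine tendsto_weightedSqIntegral_of_bounded (C := 2 * M + 2 * (2 * M)) hw hpos hR hγ
    (fun n => ?_) (by finiteness) hconv
  exact (weightedSqIntegral_sub_le (hw.pow_const γ₁).aemeasurable (hu n)).trans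
    (by gcongr; exact hM n)

end Exhaustion

section DistanceToFrontier

variable {E : Type*}

lemma nonempty_frontier_of_isBounded [NormedAddCommGroup E] [NormedSpace ℝ E] [Nontrivial E]
    {s : Set E} (hb : Bornology.IsBounded s) (hne : s.Nonempty) : (frontier s).Nonempty :=
  nonempty_frontier_iff.2 ⟨hne, fun h => NormedSpace.unbounded_univ ℝ E (h ▸ hb)⟩

variable [MetricSpace E] {s : Set E}

lemma infDist_frontier_pos (hs : IsOpen s) (hF : (frontier s).Nonempty) {x : E} (hx : x ∈ s) :
    0 < infDist x (frontier s) :=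
  (isClosed_frontier.notMem_iff_infDist_pos hF).1 fun h => (hs.frontier_eq ▸ h).2 hx

lemma isCompact_setOf_le_infDist_frontier_inter [ProperSpace E] (hb : Bornology.IsBounded s)
    {ε : ℝ} (hε : 0 < ε) : IsCompact ({x | ε ≤ infDist x (frontier s)} ∩ s) := by
  have hclosure : {x | ε ≤ infDist x (frontier s)} ∩ closure s ⊆ s := fun x hx =>
    interior_subset <| closure_sdiff_frontier s ▸
      ⟨hx.2, fun hxF => (infDist_zero_of_mem hxF ▸ hx.1 : ε ≤ 0).not_gt hε⟩
  rw [show {x | ε ≤ infDist x (frontier s)} ∩ s = {x | ε ≤ infDist x (frontier s)} ∩ closure s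
    from (inter_subset_inter_right _ subset_closure).antisymm
      (subset_inter inter_subset_left hclosure)]
  exact hb.isCompact_closure.inter_left (isClosed_le continuous_const (continuous_infDist_pt _))

end DistanceToFrontier

theorem weighted_L2_convergence_general
    (d : ℕ) (hd : 1 ≤ d)
    (Ω : Set (EuclideanSpace ℝ (Fin d)))
    (hΩo : IsOpen Ω) (hΩb : Bornology.IsBounded Ω) (hΩne : Ω.Nonempty)
    (γ₁ γ₂ : ℝ) (hγ : γ₁ < γ₂)
    (u : ℕ → EuclideanSpace ℝ (Fin d) → ℝ) (v : EuclideanSpace ℝ (Fin d) → ℝ)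
    -- `(u n)` and `v` belong to `L²_loc(Ω)`
    (humeas : ∀ n, AEStronglyMeasurable (u n) (volume.restrict Ω))
    -- `u_n → v` in `L²(K)` for every compact `K ⊆ Ω`
    (hconv : ∀ K : Set (EuclideanSpace ℝ (Fin d)), K ⊆ Ω → IsCompact K →
      Tendsto (fun n => ∫⁻ x in K, ENNReal.ofReal ((u n x - v x) ^ 2)) atTop (nhds 0))
    -- `sup_n ∫_Ω d_{∂Ω}^{γ₁} |u_n|² < ∞`
    (hbdd : ∃ M : ℝ, ∀ n,
      (∫⁻ x in Ω, ENNReal.ofReal (infDist x (frontier Ω) ^ γ₁ * (u n x) ^ 2)) ≤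
        ENNReal.ofReal M) :
    Tendsto
      (fun n => ∫⁻ x in Ω, ENNReal.ofReal (infDist x (frontier Ω) ^ γ₂ * (u n x - v x) ^ 2))
      atTop (nhds 0) := by
  have : Nonempty (Fin d) := ⟨⟨0, hd⟩⟩
  obtain ⟨M, hM⟩ := hbdd
  obtain ⟨y, hy⟩ := nonempty_frontier_of_isBounded hΩb hΩne
  obtain ⟨R, hR⟩ := hΩb.subset_closedBall y
  have hδ : Continuous fun x => infDist x (frontier Ω) := continuous_infDist_pt _
  refine tendsto_weightedSqIntegral_sub (R := R) hδ.measurable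
    (ae_restrict_of_forall_mem hΩo.measurableSet fun x hx => infDist_frontier_pos hΩo ⟨y, hy⟩ hx)
    (ae_restrict_of_forall_mem hΩo.measurableSet fun x hx =>
      (infDist_le_dist_of_mem hy).trans (mem_closedBall.1 (hR hx)))
    hγ (fun n => (humeas n).aemeasurable) hM ENNReal.ofReal_ne_top fun ε hε => ?_
  rw [Measure.restrict_restrict (measurableSet_le measurable_const hδ.measurable)]
  exact hconv _ inter_subset_right (isCompact_setOf_le_infDist_frontier_inter hΩb hε)

/-- Weighted interpolation lemma: if `(u_n)` converges to `u` in `L²_loc(Ω)` and is bounded in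
the weighted space `L²(d_{∂Ω}^{γ₁}, Ω)`, then `u_n → u` in `L²(d_{∂Ω}^{γ₂}, Ω)` for any
`γ₂ > γ₁`. -/
theorem weighted_L2_convergence
    (d : ℕ) (hd : 1 ≤ d)
    (Ω : Set (EuclideanSpace ℝ (Fin d)))
    (hΩo : IsOpen Ω) (hΩb : Bornology.IsBounded Ω) (hΩne : Ω.Nonempty)
    (γ₁ γ₂ : ℝ) (hγ : γ₁ < γ₂)
    (u : ℕ → EuclideanSpace ℝ (Fin d) → ℝ) (v : EuclideanSpace ℝ (Fin d) → ℝ)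
    -- `(u n)` and `v` belong to `L²_loc(Ω)`
    (humeas : ∀ n, AEStronglyMeasurable (u n) (volume.restrict Ω))
    (hvmeas : AEStronglyMeasurable v (volume.restrict Ω))
    (huloc : ∀ n, ∀ K : Set (EuclideanSpace ℝ (Fin d)), K ⊆ Ω → IsCompact K →
      IntegrableOn (fun x => (u n x) ^ 2) K volume)
    (hvloc : ∀ K : Set (EuclideanSpace ℝ (Fin d)), K ⊆ Ω → IsCompact K →
      IntegrableOn (fun x => (v x) ^ 2) K volume)
    -- `u_n → v` in `L²(K)` for every compact `K ⊆ Ω`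
    (hconv : ∀ K : Set (EuclideanSpace ℝ (Fin d)), K ⊆ Ω → IsCompact K →
      Tendsto (fun n => ∫⁻ x in K, ENNReal.ofReal ((u n x - v x) ^ 2)) atTop (nhds 0))
    -- `sup_n ∫_Ω d_{∂Ω}^{γ₁} |u_n|² < ∞`
    (hbdd : ∃ M : ℝ, ∀ n,
      (∫⁻ x in Ω, ENNReal.ofReal (infDist x (frontier Ω) ^ γ₁ * (u n x) ^ 2)) ≤
        ENNReal.ofReal M) :
    Tendsto
      (fun n => ∫⁻ x in Ω, ENNReal.ofReal (infDist x (frontier Ω) ^ γ₂ * (u n x - v x) ^ 2))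
      atTop (nhds 0) :=
  weighted_L2_convergence_general d hd Ω hΩo hΩb hΩne γ₁ γ₂ hγ u v humeas hconv hbdd
end

section
/- Let 0 < λ ≤ Λ. There exists a constant c > 0 depending only on λ and Λ such that the following holds. Let ε and ε̂ be real symmetric 3×3 matrices satisfying λ|ξ|² ≤ ⟨εξ,ξ⟩ ≤ Λ|ξ|² and λ|ξ|² ≤ ⟨ε̂ξ,ξ⟩ ≤ Λ|ξ|² for all ξ ∈ ℝ³, and suppose ε − ε̂ is positive semidefinite. Then for all x, y ∈ ℝ³, ⟨(ε − ε̂)x, x⟩ + ⟨εy, y⟩ + ⟨(ε − ε̂)x, y⟩ + ⟨(ε − ε̂)y, x⟩ ≥ c ( ⟨(ε − ε̂)x, x⟩ + ⟨εy, y⟩ ). -/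
open scoped Matrix

/-- Coercivity of the quadratic form used in the variational approach: if `ε, ε'` are real
symmetric matrices with ellipticity constants `λ, Λ` and `ε − ε'` is positive semidefinite,
then `⟨(ε−ε')x,x⟩ + ⟨εy,y⟩ + ⟨(ε−ε')x,y⟩ + ⟨(ε−ε')y,x⟩ ≥ c (⟨(ε−ε')x,x⟩ + ⟨εy,y⟩)` for a
constant `c > 0` depending only on `λ` and `Λ`. -/
theorem coercivity_quadratic_form (lam Lam : ℝ) (hlam : 0 < lam) (hLam : lam ≤ Lam) :
    ∃ c : ℝ, 0 < c ∧
      ∀ eps epsh : Matrix (Fin 3) (Fin 3) ℝ,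
        eps.IsSymm → epsh.IsSymm →
        (∀ ξ : Fin 3 → ℝ,
          lam * (ξ ⬝ᵥ ξ) ≤ eps.mulVec ξ ⬝ᵥ ξ ∧ eps.mulVec ξ ⬝ᵥ ξ ≤ Lam * (ξ ⬝ᵥ ξ)) →
        (∀ ξ : Fin 3 → ℝ,
          lam * (ξ ⬝ᵥ ξ) ≤ epsh.mulVec ξ ⬝ᵥ ξ ∧ epsh.mulVec ξ ⬝ᵥ ξ ≤ Lam * (ξ ⬝ᵥ ξ)) →
        (∀ ξ : Fin 3 → ℝ, 0 ≤ (eps - epsh).mulVec ξ ⬝ᵥ ξ) →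
        ∀ x y : Fin 3 → ℝ,
          c * ((eps - epsh).mulVec x ⬝ᵥ x + eps.mulVec y ⬝ᵥ y) ≤
            (eps - epsh).mulVec x ⬝ᵥ x + eps.mulVec y ⬝ᵥ y +
              (eps - epsh).mulVec x ⬝ᵥ y + (eps - epsh).mulVec y ⬝ᵥ x := by
  have hLam0 : 0 < Lam := lt_of_lt_of_le hlam hLam
  have hdiv0 : 0 < lam / Lam := div_pos hlam hLam0
  have hdiv1 : lam / Lam ≤ 1 := (div_le_one hLam0).2 hLam
  have hμ0 : (0:ℝ) ≤ 1 - lam / Lam := by linarith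
  set s : ℝ := Real.sqrt (1 - lam / Lam) with hs
  have hs0 : 0 ≤ s := Real.sqrt_nonneg _
  have hs2 : s ^ 2 = 1 - lam / Lam := Real.sq_sqrt hμ0
  have hs1 : s < 1 := by nlinarith [hs2, hs0]
  refine ⟨1 - s, by linarith, ?_⟩
  intro eps epsh hsym hsymh heps hepsh hpsd x y
  set D := eps - epsh with hD
  have hDsym : D.IsSymm := hsym.sub hsymh
  have hsymD : ∀ u v : Fin 3 → ℝ, D.mulVec u ⬝ᵥ v = D.mulVec v ⬝ᵥ u := by
    intro u v
    rw [dotProduct_comm, Matrix.dotProduct_mulVec, ← Matrix.mulVec_transpose, hDsym.eq,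
      dotProduct_comm]
  set A := D.mulVec x ⬝ᵥ x with hA
  set B := eps.mulVec y ⬝ᵥ y with hB
  set C := D.mulVec x ⬝ᵥ y with hC
  set E := D.mulVec y ⬝ᵥ y with hE
  have hA0 : 0 ≤ A := hpsd x
  have hE0 : 0 ≤ E := hpsd y
  have hyy : 0 ≤ y ⬝ᵥ y := dotProduct_self_star_nonneg y
  have hB0 : 0 ≤ B := le_trans (by positivity) (heps y).1
  -- E ≤ s^2 * B
  have hEB : E ≤ s ^ 2 * B := by
    have h1 : E = B - epsh.mulVec y ⬝ᵥ y := by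
      simp [hE, hB, hD, Matrix.sub_mulVec, sub_dotProduct]
    have h2 := (hepsh y).1
    have h3 := (heps y).2
    have h4 : lam / Lam * B ≤ lam * (y ⬝ᵥ y) := by
      rw [div_mul_eq_mul_div, div_le_iff₀ hLam0]
      nlinarith
    rw [h1, hs2]
    nlinarith
  -- Cauchy-Schwarz via discriminant
  have hq : ∀ t : ℝ, 0 ≤ E * (t * t) + (2 * C) * t + A := by
    intro t
    have h := hpsd (x + t • y)
    have hexp : D.mulVec (x + t • y) ⬝ᵥ (x + t • y)
        = E * (t * t) + (2 * C) * t + A := by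
      have hsy := hsymD y x
      simp only [Matrix.mulVec_add, Matrix.mulVec_smul, add_dotProduct,
        dotProduct_add, smul_dotProduct, dotProduct_smul,
        smul_eq_mul, ← hA, ← hC, ← hE]
      rw [hsy]
      ring
    rwa [hexp] at h
  have hdisc : discrim E (2 * C) A ≤ 0 := discrim_le_zero hq
  rw [discrim] at hdisc
  have h4 : 4 * C ^ 2 ≤ 4 * s ^ 2 * A * B := by
    nlinarith [mul_le_mul_of_nonneg_left hEB hA0]
  have h5 : (2 * C) ^ 2 ≤ (s * (A + B)) ^ 2 := by
    nlinarith [sq_nonneg (A - B), sq_nonneg s]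
  have hP : 0 ≤ s * (A + B) := mul_nonneg hs0 (by linarith)
  have hcross : (eps - epsh).mulVec y ⬝ᵥ x = C := hsymD y x
  show (1 - s) * (A + B) ≤ A + B + C + (eps - epsh).mulVec y ⬝ᵥ x
  rw [hcross]
  nlinarith [h5, hP]
end
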